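/- arXiv:1303.2887 — 6 statements merged into one kernel-verified Lean document; each statement's English description precedes it below -/
import Mathlib

section
/- Let (a_k) and (b_k) be two sequences of positive integers with a_k ≡ b_k (mod 4) for all k ≥ 0, and let (s_k, t_k) and (u_k, v_k) be the corresponding continued fraction numerator/denominator sequences. Then for every k, t_k is odd if and only if v_k is odd, and when t_k and v_k are odd, the Jacobi symbols satisfy (s_k / t_k) = (u_k / v_k). -/
/-!
Everything reduces to the denominators. By the recurrence `t_k mod 4` only depends on the
`a_i mod 4`, and `s_{k+1} t_k - s_k t_{k+1} = (-1)^k` gives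
`J(s_{k+1} | t_{k+1}) = J(-1 | t_{k+1})^k J(t_k | t_{k+1})`, whose first factor only depends on
`t_{k+1} mod 4`. So it suffices to propagate the Jacobi symbol of the consecutive pair
`(t_k, t_{k+1})`, taken with its odd member at the bottom. When `t_{k+1}` is odd, one step of the
recurrence changes it by a reciprocity sign determined by residues mod `4`. When `t_{k+1}` is
even, `J(t_{k+1} | a t_{k+1} + t_k)` has period `4` in `a`, and each increment of `a` changes it
by `J(-1 | ·)` times a reciprocity sign, again determined by residues mod `4`.
-/

/-- Numerators of continued fraction convergents: `cfS a k = s_k`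
(with `s_{-1} = 1`, `s_0 = a_0`, `s_k = a_k s_{k-1} + s_{k-2}`). -/
def cfS (a : ℕ → ℤ) : ℕ → ℤ
  | 0 => a 0
  | 1 => a 1 * a 0 + 1
  | (k+2) => a (k+2) * cfS a (k+1) + cfS a k

/-- Denominators of continued fraction convergents: `cfT a k = t_k`
(with `t_{-1} = 0`, `t_0 = 1`, `t_k = a_k t_{k-1} + t_{k-2}`). -/
def cfT (a : ℕ → ℤ) : ℕ → ℤ
  | 0 => 1
  | 1 => a 1
  | (k+2) => a (k+2) * cfT a (k+1) + cfT a k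

open NumberTheorySymbols

theorem odd_iff_of_modEq_four {m n : ℕ} (h : m ≡ n [MOD 4]) : Odd m ↔ Odd n := by
  rw [Nat.odd_iff, Nat.odd_iff]
  unfold Nat.ModEq at h
  omega

theorem even_iff_of_modEq_four {m n : ℕ} (h : m ≡ n [MOD 4]) : Even m ↔ Even n := by
  simpa using (odd_iff_of_modEq_four h).not

theorem natAbs_modEq_of_nonneg {x y : ℤ} {n : ℕ} (hx : 0 ≤ x) (hy : 0 ≤ y)
    (h : x ≡ y [ZMOD n]) : x.natAbs ≡ y.natAbs [MOD n] := by
  rwa [← Int.natCast_modEq_iff, Int.natAbs_of_nonneg hx, Int.natAbs_of_nonneg hy]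

theorem odd_or_odd_of_isCoprime {x y : ℤ} (h : IsCoprime x y) : Odd x ∨ Odd y := by
  by_contra! hxy
  simp only [Int.not_odd_iff_even, even_iff_two_dvd] at hxy
  have h2 := Int.isUnit_iff.mp (h.isUnit_of_dvd' hxy.1 hxy.2)
  omega

theorem qrSign_congr_of_modEq_four {m n m' n' : ℕ} (hm : Odd m) (hn : Odd n)
    (hmm' : m ≡ m' [MOD 4]) (hnn' : n ≡ n' [MOD 4]) : qrSign m n = qrSign m' n' := by
  rw [qrSign.neg_one_pow hm hn,
    qrSign.neg_one_pow ((odd_iff_of_modEq_four hmm').mp hm) ((odd_iff_of_modEq_four hnn').mp hn),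
    neg_one_pow_eq_pow_mod_two, neg_one_pow_eq_pow_mod_two (m' / 2 * _), Nat.mul_mod,
    Nat.mul_mod (m' / 2)]
  unfold Nat.ModEq at hmm' hnn'
  have hm2 : m / 2 % 2 = m' / 2 % 2 := by omega
  have hn2 : n / 2 % 2 = n' / 2 % 2 := by omega
  rw [hm2, hn2]

namespace jacobiSym

theorem congr_right (a : ℤ) {b b' : ℕ} (hb : Odd b) (hb' : Odd b')
    (h : b ≡ b' [MOD 4 * a.natAbs]) : J(a | b) = J(a | b') := by
  rw [mod_right a hb, mod_right a hb', h]

theorem mul_add_mod_left (α p q : ℕ) : J(↑(α * q + p) | q) = J(p | q) :=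
  mod_left' (by push_cast; rw [mul_comm, Int.mul_add_emod_self_left])

theorem eq_mul_of_mul_modEq {x y ε : ℤ} {n : ℕ} (hy : y.gcd n = 1)
    (h : x * y ≡ ε [ZMOD n]) : J(x | n) = J(ε | n) * J(y | n) := by
  calc J(x | n) = J(x | n) * J(y | n) ^ 2 := by rw [sq_one hy, mul_one]
    _ = J(x * y | n) * J(y | n) := by rw [mul_left]; ring
    _ = J(ε | n) * J(y | n) := by rw [mod_left' h]

theorem add_self_right_of_even {n t : ℕ} (hn : Odd n) (ht : Even t) :
    J(t | n + t) = ZMod.χ₄ (n + t : ℕ) * qrSign (n + t) n * J(t | n) := by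
  have hnt : Odd (n + t) := hn.add_even ht
  have ht_neg : (t : ℤ) ≡ -1 * n [ZMOD (n + t : ℕ)] :=
    Int.modEq_iff_dvd.mpr ⟨-1, by push_cast; ring⟩
  rw [mod_left' ht_neg, mul_left, at_neg_one hnt, quadratic_reciprocity' hn hnt, mul_assoc,
    ← mul_add_mod_left 1 t n, one_mul]

end jacobiSym

section

variable {t T n N : ℕ}

theorem jacobiSym_add_congr_of_even (ht : Even t) (hn : Odd n) (htT : t ≡ T [MOD 4])
    (hnN : n ≡ N [MOD 4]) (h : J(t | n) = J(T | N)) : J(t | n + t) = J(T | N + T) := by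
  have hT : Even T := (even_iff_of_modEq_four htT).mp ht
  have hN : Odd N := (odd_iff_of_modEq_four hnN).mp hn
  have hsum : n + t ≡ N + T [MOD 4] := hnN.add htT
  rw [jacobiSym.add_self_right_of_even hn ht, jacobiSym.add_self_right_of_even hN hT, h,
    (ZMod.natCast_eq_natCast_iff _ _ _).mpr hsum,
    qrSign_congr_of_modEq_four (hn.add_even ht) hn hsum hnN]

theorem jacobiSym_mul_add_eq_mod_four (ht : Even t) (hn : Odd n) (α : ℕ) :
    J(t | α * t + n) = J(t | α % 4 * t + n) :=
  jacobiSym.congr_right _ ((ht.mul_left α).add_odd hn) ((ht.mul_left _).add_odd hn)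
    (by simpa using ((Nat.mod_modEq α 4).symm.mul_right' t).add_right n)

theorem jacobiSym_mul_add_congr_of_even (ht : Even t) (hn : Odd n) (htT : t ≡ T [MOD 4])
    (hnN : n ≡ N [MOD 4]) (h : J(t | n) = J(T | N)) (α : ℕ) :
    J(t | α * t + n) = J(T | α * T + N) := by
  induction α with
  | zero => simpa using h
  | succ α ih =>
    rw [add_one_mul, add_one_mul, add_right_comm _ t, add_right_comm _ T]
    exact jacobiSym_add_congr_of_even ht ((ht.mul_left α).add_odd hn) htT
      (((Nat.ModEq.refl α).mul htT).add hnN) ih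

theorem jacobiSym_mul_add_congr_of_even_of_modEq (ht : Even t) (hn : Odd n)
    (htT : t ≡ T [MOD 4]) (hnN : n ≡ N [MOD 4]) (h : J(t | n) = J(T | N)) {α β : ℕ}
    (hαβ : α ≡ β [MOD 4]) :
    J(t | α * t + n) = J(T | β * T + N) := by
  have hT : Even T := (even_iff_of_modEq_four htT).mp ht
  have hN : Odd N := (odd_iff_of_modEq_four hnN).mp hn
  rw [jacobiSym_mul_add_eq_mod_four ht hn, jacobiSym_mul_add_eq_mod_four hT hN, hαβ]
  exact jacobiSym_mul_add_congr_of_even ht hn htT hnN h _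

end

def pairJacobi (p q : ℕ) : ℤ :=
  if Even q then J(q | p) else J(p | q)

theorem pairJacobi_of_even {p q : ℕ} (hq : Even q) : pairJacobi p q = J(q | p) := if_pos hq

theorem pairJacobi_of_odd {p q : ℕ} (hq : Odd q) : pairJacobi p q = J(p | q) :=
  if_neg (Nat.not_even_iff_odd.mpr hq)

theorem pairJacobi_one_left (q : ℕ) : pairJacobi 1 q = 1 := by
  simp [pairJacobi, jacobiSym.one_left, jacobiSym.one_right]

theorem pairJacobi_mul_add_congr {p q P Q α β : ℕ} (hpq : Odd p ∨ Odd q)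
    (hpP : p ≡ P [MOD 4]) (hqQ : q ≡ Q [MOD 4]) (hαβ : α ≡ β [MOD 4])
    (h : pairJacobi p q = pairJacobi P Q) :
    pairJacobi q (α * q + p) = pairJacobi Q (β * Q + P) := by
  have hr : α * q + p ≡ β * Q + P [MOD 4] := (hαβ.mul hqQ).add hpP
  rcases Nat.even_or_odd q with hq | hq
  · have hQ : Even Q := (even_iff_of_modEq_four hqQ).mp hq
    have hp : Odd p := hpq.resolve_right (Nat.not_odd_iff_even.mpr hq)
    have hr_odd : Odd (α * q + p) := (hq.mul_left α).add_odd hp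
    rw [pairJacobi_of_even hq, pairJacobi_of_even hQ] at h
    rw [pairJacobi_of_odd hr_odd, pairJacobi_of_odd ((odd_iff_of_modEq_four hr).mp hr_odd)]
    exact jacobiSym_mul_add_congr_of_even_of_modEq hq hp hqQ hpP h hαβ
  · have hQ : Odd Q := (odd_iff_of_modEq_four hqQ).mp hq
    rw [pairJacobi_of_odd hq, pairJacobi_of_odd hQ] at h
    rcases Nat.even_or_odd (α * q + p) with hr_even | hr_odd
    · have hR : Even (β * Q + P) := (even_iff_of_modEq_four hr).mp hr_even
      rw [pairJacobi_of_even hr_even, pairJacobi_of_even hR, jacobiSym.mul_add_mod_left,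
        jacobiSym.mul_add_mod_left, h]
    · have hR : Odd (β * Q + P) := (odd_iff_of_modEq_four hr).mp hr_odd
      rw [pairJacobi_of_odd hr_odd, pairJacobi_of_odd hR,
        jacobiSym.quadratic_reciprocity' hq hr_odd, jacobiSym.quadratic_reciprocity' hQ hR,
        jacobiSym.mul_add_mod_left, jacobiSym.mul_add_mod_left, h,
        qrSign_congr_of_modEq_four hr_odd hq hr hqQ]

section ContinuedFraction

variable {a b : ℕ → ℤ}

theorem cfS_mul_cfT_sub (a : ℕ → ℤ) :
    ∀ k, cfS a (k + 1) * cfT a k - cfS a k * cfT a (k + 1) = (-1) ^ k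
  | 0 => by simp only [cfS, cfT]; ring
  | k + 1 => by
    simp only [cfS, cfT]
    linear_combination (-1) * cfS_mul_cfT_sub a k

theorem isCoprime_cfT_cfT_succ (a : ℕ → ℤ) (k : ℕ) :
    IsCoprime (cfT a k) (cfT a (k + 1)) :=
  have hsq : ((-1 : ℤ) ^ k) ^ 2 = 1 := by simp [← pow_mul, pow_mul']
  ⟨(-1) ^ k * cfS a (k + 1), -(-1) ^ k * cfS a k, by
    linear_combination (-1) ^ k * cfS_mul_cfT_sub a k + hsq⟩

theorem cfT_modEq (hab : ∀ i, a i ≡ b i [ZMOD 4]) : ∀ k, cfT a k ≡ cfT b k [ZMOD 4]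
  | 0 => rfl
  | 1 => hab 1
  | k + 2 => ((hab (k + 2)).mul (cfT_modEq hab (k + 1))).add (cfT_modEq hab k)

theorem cfT_nonneg (ha : ∀ i, 1 ≤ i → 0 ≤ a i) : ∀ k, 0 ≤ cfT a k
  | 0 => zero_le_one
  | 1 => ha 1 le_rfl
  | k + 2 => add_nonneg (mul_nonneg (ha _ (by omega)) (cfT_nonneg ha (k + 1))) (cfT_nonneg ha k)

theorem natAbs_cfT_modEq (ha : ∀ i, 1 ≤ i → 0 ≤ a i) (hb : ∀ i, 1 ≤ i → 0 ≤ b i)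
    (hab : ∀ i, a i ≡ b i [ZMOD 4]) (k : ℕ) : (cfT a k).natAbs ≡ (cfT b k).natAbs [MOD 4] :=
  natAbs_modEq_of_nonneg (cfT_nonneg ha k) (cfT_nonneg hb k) (cfT_modEq hab k)

theorem natAbs_cfT_add_two (ha : ∀ i, 1 ≤ i → 0 ≤ a i) (k : ℕ) :
    (cfT a (k + 2)).natAbs =
      (a (k + 2)).natAbs * (cfT a (k + 1)).natAbs + (cfT a k).natAbs := by
  rw [cfT, Int.natAbs_add_of_nonneg (mul_nonneg (ha _ (by omega)) (cfT_nonneg ha _))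
    (cfT_nonneg ha k), Int.natAbs_mul]

theorem pairJacobi_natAbs_cfT_congr (ha : ∀ i, 1 ≤ i → 0 ≤ a i)
    (hb : ∀ i, 1 ≤ i → 0 ≤ b i) (hab : ∀ i, a i ≡ b i [ZMOD 4]) : ∀ k,
    pairJacobi (cfT a k).natAbs (cfT a (k + 1)).natAbs =
      pairJacobi (cfT b k).natAbs (cfT b (k + 1)).natAbs
  | 0 => by simp [cfT, pairJacobi_one_left]
  | k + 1 => by
    rw [natAbs_cfT_add_two ha, natAbs_cfT_add_two hb]
    refine pairJacobi_mul_add_congr ?_ (natAbs_cfT_modEq ha hb hab k)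
      (natAbs_cfT_modEq ha hb hab (k + 1))
      (natAbs_modEq_of_nonneg (ha _ (by omega)) (hb _ (by omega)) (hab _))
      (pairJacobi_natAbs_cfT_congr ha hb hab k)
    simpa only [Int.natAbs_odd] using odd_or_odd_of_isCoprime (isCoprime_cfT_cfT_succ a k)

theorem jacobiSym_cfS_succ (a : ℕ → ℤ) (k : ℕ) :
    J(cfS a (k + 1) | (cfT a (k + 1)).natAbs) =
      J((-1) ^ k | (cfT a (k + 1)).natAbs) * J(cfT a k | (cfT a (k + 1)).natAbs) := by
  refine jacobiSym.eq_mul_of_mul_modEq ?_ (Int.modEq_iff_dvd.mpr (Int.natAbs_dvd.mpr ?_))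
  · rw [Int.gcd, Int.natAbs_natCast]
    exact Int.isCoprime_iff_gcd_eq_one.mp (isCoprime_cfT_cfT_succ a k)
  · exact ⟨-cfS a k, by linear_combination -cfS_mul_cfT_sub a k⟩

end ContinuedFraction

theorem jacobi_symbol_depends_only_on_partial_quotients_mod_four
    (a b : ℕ → ℤ) (ha : ∀ i, 1 ≤ i → 0 < a i) (hb : ∀ i, 1 ≤ i → 0 < b i)
    (hab : ∀ i, a i ≡ b i [ZMOD 4]) (k : ℕ) :
    (Odd (cfT a k) ↔ Odd (cfT b k)) ∧
    (Odd (cfT a k) → Odd (cfT b k) →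
      jacobiSym (cfS a k) (cfT a k).natAbs = jacobiSym (cfS b k) (cfT b k).natAbs) := by
  have ha' : ∀ i, 1 ≤ i → 0 ≤ a i := fun i hi => (ha i hi).le
  have hb' : ∀ i, 1 ≤ i → 0 ≤ b i := fun i hi => (hb i hi).le
  have hmod := natAbs_cfT_modEq ha' hb' hab
  refine ⟨by simpa only [Int.natAbs_odd] using odd_iff_of_modEq_four (hmod k),
    fun hta htb => ?_⟩
  cases k with
  | zero => simp [cfT, jacobiSym.one_right]
  | succ k =>
    rw [← Int.natAbs_odd] at hta htb
    rw [jacobiSym_cfS_succ, jacobiSym_cfS_succ]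
    congr 1
    · exact jacobiSym.congr_right _ hta htb (by simpa using hmod (k + 1))
    · rw [← Int.natAbs_of_nonneg (cfT_nonneg ha' k), ← Int.natAbs_of_nonneg (cfT_nonneg hb' k),
        ← pairJacobi_of_odd hta, ← pairJacobi_of_odd htb]
      exact pairJacobi_natAbs_cfT_congr ha' hb' hab k
end

section
/- For any continued fraction [a_0,a_1,a_2,...] with positive integer partial quotients a_k (k ≥ 1), there is no index k such that the denominators t_k, t_{k+1}, t_{k+2}, t_{k+3} are all odd and the Jacobi symbols satisfy (s_k/t_k) = -1, (s_{k+1}/t_{k+1}) = 1, (s_{k+2}/t_{k+2}) = 1, (s_{k+3}/t_{k+3}) = -1. -/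
/-!
From `s_{k+1} t_k - s_k t_{k+1} = (-1)^k` we get `s_{k+1} t_k ≡ (-1)^k (mod t_{k+1})` and
`s_k t_{k+1} ≡ (-1)^{k+1} (mod t_k)`; multiplying the two resulting Jacobi symbol identities and
applying quadratic reciprocity to `(t_k / t_{k+1}) (t_{k+1} / t_k)` expresses
`(s_k / t_k) (s_{k+1} / t_{k+1})` through `t_k, t_{k+1} mod 4` and the parity of `k`.
A sign change at both `k` and `k + 2` pins down `t_k, …, t_{k+3} mod 4`, and these residues force
a sign change at `k + 1` as well, which the pattern `-1, 1, 1, -1` forbids.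
-/

theorem jacobiSym_mul_jacobiSym_of_mul_sub_mul_eq_neg_one_pow {s s' : ℤ} {m n : ℕ}
    (hm : Odd m) (hn : Odd n) (k : ℕ) (h : s' * m - s * n = (-1) ^ k) :
    jacobiSym s m * jacobiSym s' n =
      (-1) ^ (k * (n / 2) + (k + 1) * (m / 2) + m / 2 * (n / 2)) := by
  have neg_one_pow_sq (e : ℕ) : ((-1 : ℤ) ^ e) ^ 2 = 1 := by
    rw [← pow_mul, pow_mul', neg_one_sq, one_pow]
  have hcop : Int.gcd n m = 1 := Int.isCoprime_iff_gcd_eq_one.mp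
    ⟨-(-1) ^ k * s, (-1) ^ k * s', by linear_combination (-1) ^ k * h + neg_one_pow_sq k⟩
  have jacobiSym_neg_one_pow {b : ℕ} (hb : Odd b) (e : ℕ) :
      jacobiSym ((-1) ^ e) b = (-1) ^ (e * (b / 2)) := by
    rw [jacobiSym.pow_left, jacobiSym.at_neg_one hb, ZMod.χ₄_eq_neg_one_pow (Nat.odd_iff.mp hb),
      ← pow_mul, mul_comm]
  have mod_n : jacobiSym s' n * jacobiSym m n = (-1) ^ (k * (n / 2)) := by
    rw [← jacobiSym.mul_left, ← jacobiSym_neg_one_pow hn]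
    exact jacobiSym.mod_left' (Int.modEq_iff_dvd.mpr ⟨-s, by linear_combination -h⟩)
  have mod_m : jacobiSym s m * jacobiSym n m = (-1) ^ ((k + 1) * (m / 2)) := by
    rw [← jacobiSym.mul_left, ← jacobiSym_neg_one_pow hm]
    exact jacobiSym.mod_left' (Int.modEq_iff_dvd.mpr ⟨-s', by linear_combination h⟩)
  rw [pow_add, pow_add, ← mod_n, ← mod_m, jacobiSym.quadratic_reciprocity hm hn]
  linear_combination (-(jacobiSym s m * jacobiSym s' n)) *
    (((-1) ^ (m / 2 * (n / 2))) ^ 2 * jacobiSym.sq_one hcop + neg_one_pow_sq (m / 2 * (n / 2)))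

theorem jacobiSym_mul_jacobiSym_eq_neg_one_iff {s s' : ℤ} {m n : ℕ}
    (hm : Odd m) (hn : Odd n) (k : ℕ) (h : s' * m - s * n = (-1) ^ k) :
    jacobiSym s m * jacobiSym s' n = -1 ↔
      m % 4 = 3 ∧ n % 4 = 1 ∧ k % 2 = 0 ∨ m % 4 = 1 ∧ n % 4 = 3 ∧ k % 2 = 1 := by
  rw [jacobiSym_mul_jacobiSym_of_mul_sub_mul_eq_neg_one_pow hm hn k h,
    neg_one_pow_eq_neg_one_iff_odd (by decide)]
  rw [Nat.odd_iff] at hm hn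
  simp only [Nat.odd_add, Nat.odd_mul, Nat.even_mul, Nat.even_add_one]
  simp only [Nat.odd_iff, Nat.even_iff]
  omega

theorem cfS_succ_mul_cfT_sub_cfS_mul_cfT_succ (a : ℕ → ℤ) (k : ℕ) :
    cfS a (k + 1) * cfT a k - cfS a k * cfT a (k + 1) = (-1) ^ k := by
  induction k with
  | zero => simp only [cfS, cfT]; ring
  | succ k ih =>
    rw [cfS, cfT, pow_succ, ← ih]
    ring

theorem cfT_pos {a : ℕ → ℤ} (ha : ∀ i, 1 ≤ i → 0 < a i) (k : ℕ) : 0 < cfT a k := by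
  induction k using Nat.strong_induction_on with
  | _ k ih =>
    match k with
    | 0 => simp [cfT]
    | 1 => simpa [cfT] using ha 1 le_rfl
    | k + 2 =>
      rw [cfT]
      have := ha (k + 2) (by omega)
      nlinarith [ih k (by omega), ih (k + 1) (by omega)]

theorem jacobiSym_cfS_mul_jacobiSym_cfS_succ_eq_neg_one_iff {a : ℕ → ℤ}
    (ha : ∀ i, 1 ≤ i → 0 < a i) {k : ℕ} (hk : Odd (cfT a k)) (hk' : Odd (cfT a (k + 1))) :
    jacobiSym (cfS a k) (cfT a k).natAbs *
        jacobiSym (cfS a (k + 1)) (cfT a (k + 1)).natAbs = -1 ↔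
      (cfT a k).natAbs % 4 = 3 ∧ (cfT a (k + 1)).natAbs % 4 = 1 ∧ k % 2 = 0 ∨
        (cfT a k).natAbs % 4 = 1 ∧ (cfT a (k + 1)).natAbs % 4 = 3 ∧ k % 2 = 1 := by
  refine jacobiSym_mul_jacobiSym_eq_neg_one_iff hk.natAbs hk'.natAbs k ?_
  rw [Int.natAbs_of_nonneg (cfT_pos ha k).le, Int.natAbs_of_nonneg (cfT_pos ha (k + 1)).le]
  exact cfS_succ_mul_cfT_sub_cfS_mul_cfT_succ a k

theorem no_pattern_neg_one_one_one_neg_one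
    (a : ℕ → ℤ) (ha : ∀ i, 1 ≤ i → 0 < a i) :
    ¬ ∃ k : ℕ,
      Odd (cfT a k) ∧ Odd (cfT a (k+1)) ∧ Odd (cfT a (k+2)) ∧ Odd (cfT a (k+3)) ∧
      jacobiSym (cfS a k) (cfT a k).natAbs = -1 ∧
      jacobiSym (cfS a (k+1)) (cfT a (k+1)).natAbs = 1 ∧
      jacobiSym (cfS a (k+2)) (cfT a (k+2)).natAbs = 1 ∧
      jacobiSym (cfS a (k+3)) (cfT a (k+3)).natAbs = -1 := by
  rintro ⟨k, o0, o1, o2, o3, j0, j1, j2, j3⟩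
  have flip_k := (jacobiSym_cfS_mul_jacobiSym_cfS_succ_eq_neg_one_iff ha o0 o1).mp
    (by rw [j0, j1]; norm_num)
  have no_flip_k_add_one := mt (jacobiSym_cfS_mul_jacobiSym_cfS_succ_eq_neg_one_iff ha o1 o2).mpr
    (by rw [j1, j2]; norm_num)
  have flip_k_add_two := (jacobiSym_cfS_mul_jacobiSym_cfS_succ_eq_neg_one_iff ha o2 o3).mp
    (by rw [j2, j3]; norm_num)
  simp only [Nat.add_assoc, Nat.reduceAdd] at no_flip_k_add_one flip_k_add_two
  omega
end

section
/- Let (k_j)_{j≥1} be a sequence of even natural numbers with k_1 ≥ 6 and k_{j+1} - k_j ≥ 6 for all j ≥ 1. Define a_0 = a_1 = 1, a_k = 2 if k = k_j - 1 or k = k_j + 1 for some j ≥ 1, and a_k = 4 otherwise. Let t_k be the denominators of the convergents of [a_0,a_1,a_2,...]. Then t_k ≡ 3 (mod 4) if k = k_j - 1 for some j, and t_k ≡ 1 (mod 4) otherwise. -/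
/-! Modulo 4 every partial quotient `a_n` with `n ≥ 2` is `0` or `2`. Where it is `0`, the recurrence
gives `t_n ≡ t_{n-2}`; where it is `2`, it gives `t_n ≡ 2 t_{n-1} + t_{n-2}`, which is `2 + 1 = 3`
at `n = k_j - 1` and `2 + 3 ≡ 1` at `n = k_j + 1`, provided the neighbouring positions are not of
the form `k_i - 1`. That is guaranteed by the parity of the `k_i` (for distance 1) and by the
gaps between them (for distance 2). -/

theorem cfT_modEq_four {a : ℕ → ℤ} {S : ℕ → Prop} (hS0 : ¬S 0) (hS1 : ¬S 1)
    (hS_succ : ∀ n, S n → ¬S (n + 1)) (hS_add_two : ∀ n, S n → ¬S (n + 2))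
    (ha1 : a 1 ≡ 1 [ZMOD 4])
    (ha_two : ∀ n, S (n + 2) ∨ S n → a (n + 2) ≡ 2 [ZMOD 4])
    (ha_zero : ∀ n, ¬(S (n + 2) ∨ S n) → a (n + 2) ≡ 0 [ZMOD 4]) (n : ℕ) :
    (S n → cfT a n ≡ 3 [ZMOD 4]) ∧ (¬S n → cfT a n ≡ 1 [ZMOD 4]) := by
  induction n using Nat.twoStepInduction with
  | zero => exact ⟨fun h => absurd h hS0, fun _ => rfl⟩
  | one => exact ⟨fun h => absurd h hS1, fun _ => ha1⟩
  | more n ih₀ ih₁ =>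
    have hrec : cfT a (n + 2) = a (n + 2) * cfT a (n + 1) + cfT a n := rfl
    have hn₁ : ¬S (n + 1) → cfT a (n + 1) ≡ 1 [ZMOD 4] := ih₁.2
    by_cases hn₂ : S (n + 2)
    · have ht₁ := hn₁ fun h => hS_succ _ h hn₂
      have ht₀ := ih₀.2 fun h => hS_add_two _ h hn₂
      refine ⟨fun _ => ?_, fun h => absurd hn₂ h⟩
      rw [hrec]
      exact ((ha_two n (.inl hn₂)).mul ht₁).add ht₀
    refine ⟨fun h => absurd h hn₂, fun _ => ?_⟩
    rw [hrec]
    by_cases hn : S n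
    · have ht₁ := hn₁ (hS_succ _ hn)
      exact ((ha_two n (.inr hn)).mul ht₁).add (ih₀.1 hn)
    · simpa using ((ha_zero n (not_or.2 ⟨hn₂, hn⟩)).mul_right (cfT a (n + 1))).add (ih₀.2 hn)

section Gaps

variable {f : ℕ → ℕ} {c : ℕ}

theorem add_le_of_gap (hgap : ∀ j, 1 ≤ j → f j + c ≤ f (j + 1)) {i j : ℕ} (hi : 1 ≤ i)
    (hij : i < j) : f i + c ≤ f j := by
  induction j, hij using Nat.le_induction with
  | base => exact hgap i hi
  | succ m him ih => exact ih.trans ((Nat.le_add_right _ _).trans (hgap m (by omega)))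

theorem le_of_gap (hgap : ∀ j, 1 ≤ j → f j + c ≤ f (j + 1)) {j : ℕ} (hj : 1 ≤ j) :
    f 1 ≤ f j := by
  rcases hj.eq_or_lt with rfl | h
  · exact le_rfl
  · exact (Nat.le_add_right _ _).trans (add_le_of_gap hgap le_rfl h)

theorem ne_add_of_gap (hgap : ∀ j, 1 ≤ j → f j + c ≤ f (j + 1)) {i j d : ℕ} (hi : 1 ≤ i)
    (hj : 1 ≤ j) (hd0 : 0 < d) (hdc : d < c) : f i ≠ f j + d := by
  rcases lt_trichotomy i j with h | rfl | h
  · have := add_le_of_gap hgap hi h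
    omega
  · omega
  · have := add_le_of_gap hgap hj h
    omega

end Gaps

theorem denominators_mod_four_construction_one_general
    (kseq : ℕ → ℕ) (heven : ∀ j, 1 ≤ j → Even (kseq j)) (h1 : 6 ≤ kseq 1)
    (hgap : ∀ j, 1 ≤ j → kseq j + 6 ≤ kseq (j+1))
    (a : ℕ → ℤ) (ha1 : a 1 = 1)
    (ha2 : ∀ n, 2 ≤ n → (∃ j, 1 ≤ j ∧ (n = kseq j - 1 ∨ n = kseq j + 1)) → a n = 2)
    (ha4 : ∀ n, 2 ≤ n → ¬(∃ j, 1 ≤ j ∧ (n = kseq j - 1 ∨ n = kseq j + 1)) → a n = 4) :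
    ∀ n, ((∃ j, 1 ≤ j ∧ n = kseq j - 1) → cfT a n ≡ 3 [ZMOD 4]) ∧
      (¬(∃ j, 1 ≤ j ∧ n = kseq j - 1) → cfT a n ≡ 1 [ZMOD 4]) := by
  have hk6 : ∀ j, 1 ≤ j → 6 ≤ kseq j := fun j hj => h1.trans (le_of_gap hgap hj)
  intro n
  refine cfT_modEq_four (S := fun n => ∃ j, 1 ≤ j ∧ n = kseq j - 1) ?_ ?_ ?_ ?_
    (by rw [ha1]) ?_ ?_ n
  · rintro ⟨j, hj, h⟩
    have := hk6 j hj
    omega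
  · rintro ⟨j, hj, h⟩
    have := hk6 j hj
    omega
  · rintro m ⟨i, hi, rfl⟩ ⟨j, hj, h⟩
    obtain ⟨r, hr⟩ := heven i hi
    obtain ⟨s, hs⟩ := heven j hj
    have := hk6 i hi
    omega
  · rintro m ⟨i, hi, rfl⟩ ⟨j, hj, h⟩
    have := hk6 i hi
    exact ne_add_of_gap (d := 2) hgap hj hi two_pos (by norm_num) (by omega)
  · rintro m (⟨j, hj, h⟩ | ⟨j, hj, h⟩)
    · rw [ha2 _ le_add_self ⟨j, hj, .inl h⟩]
    · have := hk6 j hj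
      rw [ha2 _ le_add_self ⟨j, hj, .inr (by omega)⟩]
  · intro m hm
    rw [ha4 _ le_add_self ?_]
    · rfl
    rintro ⟨j, hj, h | h⟩
    · exact hm (.inl ⟨j, hj, h⟩)
    · exact hm (.inr ⟨j, hj, by omega⟩)

theorem denominators_mod_four_construction_one
    (kseq : ℕ → ℕ) (heven : ∀ j, 1 ≤ j → Even (kseq j)) (h1 : 6 ≤ kseq 1)
    (hgap : ∀ j, 1 ≤ j → kseq j + 6 ≤ kseq (j+1))
    (a : ℕ → ℤ) (ha0 : a 0 = 1) (ha1 : a 1 = 1)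
    (ha2 : ∀ n, 2 ≤ n → (∃ j, 1 ≤ j ∧ (n = kseq j - 1 ∨ n = kseq j + 1)) → a n = 2)
    (ha4 : ∀ n, 2 ≤ n → ¬(∃ j, 1 ≤ j ∧ (n = kseq j - 1 ∨ n = kseq j + 1)) → a n = 4) :
    ∀ n, ((∃ j, 1 ≤ j ∧ n = kseq j - 1) → cfT a n ≡ 3 [ZMOD 4]) ∧
      (¬(∃ j, 1 ≤ j ∧ n = kseq j - 1) → cfT a n ≡ 1 [ZMOD 4]) :=
  denominators_mod_four_construction_one_general kseq heven h1 hgap a ha1 ha2 ha4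
end

section
/- Let (k_j)_{j≥1} be a sequence of even natural numbers with k_1 ≥ 6 and k_{j+1} - k_j ≥ 6 for all j. Define a_0 = a_1 = 1, a_k = 2 if k = k_j or k = k_j + 2 for some j, and a_k = 4 otherwise. Then the denominators t_k of the convergents of [a_0,a_1,a_2,...] satisfy t_k ≡ 3 (mod 4) if k = k_j for some j, and t_k ≡ 1 (mod 4) otherwise. -/
theorem cfT_add_two (a : ℕ → ℤ) (n : ℕ) :
    cfT a (n + 2) = a (n + 2) * cfT a (n + 1) + cfT a n := rfl

theorem cfT_odd {a : ℕ → ℤ} (ha1 : Odd (a 1)) (ha : ∀ n, Even (a (n + 2))) :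
    ∀ n, Odd (cfT a n) := by
  refine Nat.twoStepInduction odd_one ha1 fun n hn _ => ?_
  rw [cfT_add_two]
  exact (ha n).mul_right _ |>.add_odd hn

theorem cfT_add_two_modEq_four {a : ℕ → ℤ} {n : ℕ} (ht : Odd (cfT a (n + 1)))
    (ha : Even (a (n + 2))) : cfT a (n + 2) ≡ cfT a n + a (n + 2) [ZMOD 4] := by
  obtain ⟨c, hc⟩ := ha
  obtain ⟨d, hd⟩ := ht
  refine Int.modEq_iff_dvd.mpr ⟨-(c * d), ?_⟩
  rw [cfT_add_two, hc, hd]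
  ring

theorem cfT_modEq_four_s8 (K : Set ℕ) (h0 : 0 ∉ K) (h1 : 1 ∉ K) (hK : ∀ n, n + 2 ∈ K → n ∉ K)
    {a : ℕ → ℤ} (ha1 : a 1 = 1) (ha2 : ∀ n, n + 2 ∈ K ∨ n ∈ K → a (n + 2) = 2)
    (ha4 : ∀ n, ¬(n + 2 ∈ K ∨ n ∈ K) → a (n + 2) = 4) :
    ∀ n, (n ∈ K → cfT a n ≡ 3 [ZMOD 4]) ∧ (n ∉ K → cfT a n ≡ 1 [ZMOD 4]) := by
  have heven : ∀ n, Even (a (n + 2)) := fun n => by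
    by_cases h : n + 2 ∈ K ∨ n ∈ K
    · rw [ha2 n h]; decide
    · rw [ha4 n h]; decide
  have hodd : ∀ n, Odd (cfT a n) := cfT_odd (by rw [ha1]; decide) heven
  refine Nat.twoStepInduction ⟨(absurd · h0), fun _ => rfl⟩
    ⟨(absurd · h1), fun _ => by rw [cfT, ha1]⟩ fun n ih _ => ?_
  have step := cfT_add_two_modEq_four (hodd (n + 1)) (heven n)
  by_cases hn2 : n + 2 ∈ K
  · rw [ha2 n (.inl hn2)] at step
    exact ⟨fun _ => step.trans ((ih.2 (hK n hn2)).add_right 2), absurd hn2⟩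
  refine ⟨(absurd · hn2), fun _ => ?_⟩
  by_cases hn : n ∈ K
  · rw [ha2 n (.inr hn)] at step
    exact step.trans (((ih.1 hn).add_right 2).trans (by decide))
  · rw [ha4 n (by tauto)] at step
    exact step.trans (((ih.2 hn).add_right 4).trans (by decide))

theorem add_le_of_add_le_succ {f : ℕ → ℕ} {d : ℕ} (hgap : ∀ j, 1 ≤ j → f j + d ≤ f (j + 1))
    {i j : ℕ} (hi : 1 ≤ i) (hij : i < j) : f i + d ≤ f j := by
  induction j, hij using Nat.le_induction with
  | base => exact hgap i hi
  | succ j hj ih => have := hgap j (by omega); omega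

theorem denominators_mod_four_construction_two_general
    (kseq : ℕ → ℕ) (h1 : 6 ≤ kseq 1)
    (hgap : ∀ j, 1 ≤ j → kseq j + 6 ≤ kseq (j+1))
    (a : ℕ → ℤ) (ha1 : a 1 = 1)
    (ha2 : ∀ n, 2 ≤ n → (∃ j, 1 ≤ j ∧ (n = kseq j ∨ n = kseq j + 2)) → a n = 2)
    (ha4 : ∀ n, 2 ≤ n → ¬(∃ j, 1 ≤ j ∧ (n = kseq j ∨ n = kseq j + 2)) → a n = 4) :
    ∀ n, ((∃ j, 1 ≤ j ∧ n = kseq j) → cfT a n ≡ 3 [ZMOD 4]) ∧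
      (¬(∃ j, 1 ≤ j ∧ n = kseq j) → cfT a n ≡ 1 [ZMOD 4]) := by
  let K : Set ℕ := {m | ∃ j, 1 ≤ j ∧ m = kseq j}
  have hge : ∀ j, 1 ≤ j → 6 ≤ kseq j := fun j hj => by
    rcases hj.eq_or_lt with rfl | hj
    · exact h1
    · have := add_le_of_add_le_succ hgap le_rfl hj; omega
  have hK : ∀ n, n + 2 ∈ K → n ∉ K := by
    rintro n ⟨i, hi, hni⟩ ⟨j, hj, hnj⟩
    rcases lt_trichotomy i j with hij | rfl | hji
    · have := add_le_of_add_le_succ hgap hi hij; omega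
    · omega
    · have := add_le_of_add_le_succ hgap hj hji; omega
  refine cfT_modEq_four_s8 K (fun ⟨j, hj, h⟩ => by have := hge j hj; omega)
    (fun ⟨j, hj, h⟩ => by have := hge j hj; omega) hK ha1 ?_ ?_
  · rintro n (⟨j, hj, h⟩ | ⟨j, hj, h⟩)
    · exact ha2 _ (by omega) ⟨j, hj, .inl h⟩
    · exact ha2 _ (by omega) ⟨j, hj, .inr (by omega)⟩
  · intro n h
    refine ha4 _ (by omega) fun ⟨j, hj, h'⟩ => h ?_
    rcases h' with h' | h'
    · exact .inl ⟨j, hj, h'⟩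
    · exact .inr ⟨j, hj, by omega⟩

theorem denominators_mod_four_construction_two
    (kseq : ℕ → ℕ) (heven : ∀ j, 1 ≤ j → Even (kseq j)) (h1 : 6 ≤ kseq 1)
    (hgap : ∀ j, 1 ≤ j → kseq j + 6 ≤ kseq (j+1))
    (a : ℕ → ℤ) (ha0 : a 0 = 1) (ha1 : a 1 = 1)
    (ha2 : ∀ n, 2 ≤ n → (∃ j, 1 ≤ j ∧ (n = kseq j ∨ n = kseq j + 2)) → a n = 2)
    (ha4 : ∀ n, 2 ≤ n → ¬(∃ j, 1 ≤ j ∧ (n = kseq j ∨ n = kseq j + 2)) → a n = 4) :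
    ∀ n, ((∃ j, 1 ≤ j ∧ n = kseq j) → cfT a n ≡ 3 [ZMOD 4]) ∧
      (¬(∃ j, 1 ≤ j ∧ n = kseq j) → cfT a n ≡ 1 [ZMOD 4]) :=
  denominators_mod_four_construction_two_general kseq h1 hgap a ha1 ha2 ha4
end

section
/- Let L ≥ 3 and define a_k = 1 if k ≡ 0 or 1 (mod L), a_k = 3 if k ≡ -1 (mod L), and a_k = 4 otherwise. Then for the convergents s_k/t_k of [a_0,a_1,...]: t_k is even exactly when k ≡ -1 (mod L), and for all k with k not ≡ -1 (mod L) the Jacobi symbol (s_k/t_k) equals 1. -/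
theorem jacobi_sequence_with_star_construction
    (L : ℕ) (hL : 3 ≤ L)
    (a : ℕ → ℤ)
    (ha1 : ∀ k, (k % L = 0 ∨ k % L = 1) → a k = 1)
    (ha3 : ∀ k, k % L = L - 1 → a k = 3)
    (ha4 : ∀ k, ¬(k % L = 0 ∨ k % L = 1) → k % L ≠ L - 1 → a k = 4) :
    ∀ k, (Even (cfT a k) ↔ k % L = L - 1) ∧
      (k % L ≠ L - 1 → jacobiSym (cfS a k) (cfT a k).natAbs = 1) := by
  have hL1 : 1 % L = 1 := Nat.mod_eq_of_lt (by omega)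
  have hL0 : 0 % L = 0 := Nat.zero_mod L
  have ha0' : a 0 = 1 := ha1 0 (Or.inl hL0)
  have ha1' : a 1 = 1 := ha1 1 (Or.inr hL1)
  have hsucc : ∀ k : ℕ, (k+1) % L = if k % L = L-1 then 0 else k % L + 1 := by
    intro k
    have hk : k % L < L := Nat.mod_lt _ (by omega)
    rw [Nat.add_mod, hL1]
    split_ifs with h
    · rw [h, Nat.sub_add_cancel (by omega), Nat.mod_self]
    · exact Nat.mod_eq_of_lt (by omega)
  -- mod 4 invariant
  have hmod : ∀ k, cfT a k % 4 = if k % L = L-1 then 0 else 1 := by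
    intro k
    induction k using Nat.strong_induction_on with
    | _ k ih =>
      match k with
      | 0 =>
        rw [show cfT a 0 = 1 from rfl, hL0, if_neg (by omega)]
        norm_num
      | 1 =>
        rw [show cfT a 1 = a 1 from rfl, ha1', hL1, if_neg (by omega)]
        norm_num
      | (k+2) =>
        have ih1 := ih (k+1) (by omega)
        have ih0 := ih k (by omega)
        have hk : k % L < L := Nat.mod_lt _ (by omega)
        have h1 : (k+1) % L = if k % L = L-1 then 0 else k % L + 1 := hsucc k
        have h2 : (k+2) % L = if (k+1) % L = L-1 then 0 else (k+1) % L + 1 := hsucc (k+1)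
        rw [show cfT a (k+2) = a (k+2) * cfT a (k+1) + cfT a k from rfl]
        by_cases hB : k % L = L - 1
        · have e1 : (k+1) % L = 0 := by rw [h1, if_pos hB]
          have e2 : (k+2) % L = 1 := by rw [h2, e1, if_neg (by omega)]
          rw [e1, if_neg (by omega)] at ih1
          rw [if_pos hB] at ih0
          rw [ha1 (k+2) (Or.inr e2), e2, if_neg (by omega)]
          omega
        · have e1 : (k+1) % L = k % L + 1 := by rw [h1, if_neg hB]
          rw [e1] at ih1 h2
          by_cases hA : k % L = L - 2
          · have e2 : (k+2) % L = 0 := by rw [h2, if_pos (by omega)]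
            rw [if_pos (by omega)] at ih1
            rw [if_neg hB] at ih0
            rw [ha1 (k+2) (Or.inl e2), e2, if_neg (by omega)]
            omega
          · have e2 : (k+2) % L = k % L + 1 + 1 := by rw [h2, if_neg (by omega)]
            rw [if_neg (by omega)] at ih1
            rw [if_neg hB] at ih0
            by_cases hC : k % L = L - 3
            · rw [ha3 (k+2) (by omega), e2, if_pos (by omega)]
              omega
            · rw [ha4 (k+2) (by omega) (by omega), e2, if_neg (by omega)]
              omega
  -- positivity
  have hav : ∀ k, 1 ≤ a k := by
    intro k
    by_cases h1 : k % L = 0 ∨ k % L = 1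
    · rw [ha1 k h1]
    · by_cases h3 : k % L = L - 1
      · rw [ha3 k h3]; norm_num
      · rw [ha4 k h1 h3]; norm_num
  have hpos : ∀ k, 0 < cfT a k := by
    intro k
    induction k using Nat.strong_induction_on with
    | _ k ih =>
      match k with
      | 0 => norm_num [show cfT a 0 = 1 from rfl]
      | 1 => rw [show cfT a 1 = a 1 from rfl]; linarith [hav 1]
      | (k+2) =>
        rw [show cfT a (k+2) = a (k+2) * cfT a (k+1) + cfT a k from rfl]
        nlinarith [ih (k+1) (by omega), ih k (by omega), hav (k+2)]
  have hTnat : ∀ k, ((cfT a k).natAbs : ℤ) = cfT a k :=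
    fun k => Int.natAbs_of_nonneg (le_of_lt (hpos k))
  have hone : ∀ k, k % L ≠ L-1 → (cfT a k).natAbs % 4 = 1 := by
    intro k h
    have h1 := hmod k
    rw [if_neg h] at h1
    have := hpos k
    omega
  have hodd : ∀ k, k % L ≠ L-1 → Odd (cfT a k).natAbs := by
    intro k h
    have := hone k h
    exact Nat.odd_iff.mpr (by omega)
  -- the auxiliary Jacobi invariant J(t_m | t_{m+1}) = 1
  have hQ : ∀ m, (m+1) % L ≠ L-1 → jacobiSym (cfT a m) (cfT a (m+1)).natAbs = 1 := by
    intro m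
    induction m using Nat.strong_induction_on with
    | _ m ih =>
      match m with
      | 0 =>
        intro _
        rw [show cfT a 0 = 1 from rfl, jacobiSym.one_left]
      | 1 =>
        intro _
        rw [show cfT a 1 = a 1 from rfl, ha1', jacobiSym.one_left]
      | (m+2) =>
        intro hne
        have hne' : (m+3) % L ≠ L - 1 := hne
        have h1 : (m+3) % L = if (m+2) % L = L-1 then 0 else (m+2) % L + 1 := hsucc (m+2)
        have h2 : (m+2) % L = if (m+1) % L = L-1 then 0 else (m+1) % L + 1 := hsucc (m+1)
        have e3 : cfT a (m+3) = a (m+3) * cfT a (m+2) + cfT a (m+1) := rfl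
        have e2 : cfT a (m+2) = a (m+2) * cfT a (m+1) + cfT a m := rfl
        show jacobiSym (cfT a (m+2)) (cfT a (m+3)).natAbs = 1
        by_cases hz : (m+2) % L = L - 1
        · -- t_{m+2} is even here
          have f3 : (m+3) % L = 0 := by rw [h1, if_pos hz]
          have hm1 : (m+1) % L = L - 2 := by
            by_cases h : (m+1) % L = L - 1
            · rw [if_pos h] at h2; omega
            · rw [if_neg h] at h2; omega
          have haM1 : a (m+3) = 1 := ha1 _ (Or.inl f3)
          have haM : a (m+2) = 3 := ha3 _ hz
          have hn3 : (cfT a (m+3)).natAbs % 4 = 1 := hone _ (by omega)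
          have hn1 : (cfT a (m+1)).natAbs % 4 = 1 := hone _ (by omega)
          have hodd3 := hodd (m+3) (by omega)
          have key1 : jacobiSym (cfT a (m+2)) (cfT a (m+3)).natAbs
              = jacobiSym (-1 * cfT a (m+1)) (cfT a (m+3)).natAbs := by
            refine jacobiSym.mod_left' ?_
            have hrw : (-1 : ℤ) * cfT a (m+1) = cfT a (m+2) - cfT a (m+3) := by
              rw [e3, haM1]; ring
            rw [hrw, hTnat (m+3)]
            simp [Int.sub_emod]
          rw [key1, jacobiSym.mul_left, jacobiSym.at_neg_one hodd3,
            ZMod.χ₄_nat_one_mod_four hn3, one_mul]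
          rw [← hTnat (m+1),
            jacobiSym.quadratic_reciprocity_one_mod_four hn1 hodd3,
            hTnat (m+3)]
          have key2 : jacobiSym (cfT a (m+3)) (cfT a (m+1)).natAbs
              = jacobiSym (cfT a (m+2)) (cfT a (m+1)).natAbs := by
            refine jacobiSym.mod_left' ?_
            rw [e3, haM1, one_mul, hTnat (m+1)]
            simp [Int.add_emod]
          have key3 : jacobiSym (cfT a (m+2)) (cfT a (m+1)).natAbs
              = jacobiSym (cfT a m) (cfT a (m+1)).natAbs := by
            refine jacobiSym.mod_left' ?_
            rw [e2, haM, hTnat (m+1),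
              show (3 : ℤ) * cfT a (m+1) + cfT a m = cfT a m + cfT a (m+1) * 3 by ring]
            exact Int.add_mul_emod_self_left ..
          rw [key2, key3]
          exact ih m (by omega) (by omega)
        · -- t_{m+2} odd
          have hn3 : (cfT a (m+3)).natAbs % 4 = 1 := hone _ hne'
          have hn2 : (cfT a (m+2)).natAbs % 4 = 1 := hone _ hz
          have hodd3 := hodd (m+3) hne'
          rw [← hTnat (m+2),
            jacobiSym.quadratic_reciprocity_one_mod_four hn2 hodd3,
            hTnat (m+3)]
          have key : jacobiSym (cfT a (m+3)) (cfT a (m+2)).natAbs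
              = jacobiSym (cfT a (m+1)) (cfT a (m+2)).natAbs := by
            refine jacobiSym.mod_left' ?_
            rw [e3, hTnat (m+2),
              show a (m+3) * cfT a (m+2) + cfT a (m+1)
                = cfT a (m+1) + cfT a (m+2) * a (m+3) by ring]
            exact Int.add_mul_emod_self_left ..
          rw [key]
          exact ih (m+1) (by omega) hz
  -- determinant identity
  have hD : ∀ m, cfS a (m+1) * cfT a m - cfS a m * cfT a (m+1) = (-1)^m := by
    intro m
    induction m with
    | zero =>
      rw [show cfS a 1 = a 1 * a 0 + 1 from rfl, show cfS a 0 = a 0 from rfl,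
        show cfT a 0 = 1 from rfl, show cfT a 1 = a 1 from rfl]
      ring
    | succ m ihm =>
      rw [show cfS a (m+2) = a (m+2) * cfS a (m+1) + cfS a m from rfl,
        show cfT a (m+2) = a (m+2) * cfT a (m+1) + cfT a m from rfl]
      rw [pow_succ]
      linear_combination (-1 : ℤ) * ihm
  -- conclusion
  intro k
  constructor
  · have h1 := hmod k
    constructor
    · intro he
      by_contra h
      rw [if_neg h] at h1
      rw [Int.even_iff] at he
      omega
    · intro h
      rw [if_pos h] at h1
      rw [Int.even_iff]
      omega
  · intro hk
    match k, hk with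
    | 0, hk =>
      rw [show cfS a 0 = a 0 from rfl, ha0', jacobiSym.one_left]
    | (m+1), hk =>
      have hq := hQ m hk
      have hn : (cfT a (m+1)).natAbs % 4 = 1 := hone _ hk
      have hoddn := hodd (m+1) hk
      have key : jacobiSym (cfS a (m+1) * cfT a m) (cfT a (m+1)).natAbs
          = jacobiSym ((-1)^m) (cfT a (m+1)).natAbs := by
        refine jacobiSym.mod_left' ?_
        have hrw : cfS a (m+1) * cfT a m = (-1)^m + cfS a m * cfT a (m+1) := by
          linarith [hD m]
        rw [hrw, hTnat (m+1)]
        exact Int.add_mul_emod_self_right ..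
      have hneg : jacobiSym ((-1 : ℤ)^m) (cfT a (m+1)).natAbs = 1 := by
        rcases Nat.even_or_odd m with he | ho
        · rw [he.neg_one_pow, jacobiSym.one_left]
        · rw [ho.neg_one_pow, jacobiSym.at_neg_one hoddn, ZMod.χ₄_nat_one_mod_four hn]
      have hmul := jacobiSym.mul_left (cfS a (m+1)) (cfT a m) (cfT a (m+1)).natAbs
      rw [key, hneg, hq, mul_one] at hmul
      exact hmul.symm
end

section
/- For the continued fractions [1,1,1,...] (all partial quotients 1) and [3,3,3,...] (all partial quotients 3), the sequence k ↦ (s_k/t_k) of Jacobi symbols of convergents (with value * when t_k is even) is purely periodic with smallest period length 12; for [2,2,2,...] the smallest period length is 8; and for [4,4,4,...] it is 2. -/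
/-- The Jacobi sequence of a continued fraction: the Jacobi symbol `(s_k / t_k)`
when `t_k` is odd, and `none` (the symbol `*`) when `t_k` is even. -/
def jacobiSeq (a : ℕ → ℤ) (k : ℕ) : Option ℤ :=
  if Odd (cfT a k) then some (jacobiSym (cfS a k) (cfT a k).natAbs) else none

/-- Auxiliary: denominators of the constant continued fraction `[a;a,a,...]` as naturals. -/
def tnn (a : ℕ) : ℕ → ℕ
  | 0 => 1
  | 1 => a
  | (k+2) => a * tnn a (k+1) + tnn a k

lemma tnn_step (a k : ℕ) : tnn a (k+2) = a * tnn a (k+1) + tnn a k := rfl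

/-- two-step induction shift lemma -/
lemma tnn_shift (a P M : ℕ) (h0 : tnn a (0 + P) % M = tnn a 0 % M)
    (h1 : tnn a (1 + P) % M = tnn a 1 % M) : ∀ k, tnn a (k + P) % M = tnn a k % M := by
  have key : ∀ k, tnn a (k + P) % M = tnn a k % M ∧ tnn a (k+1+P) % M = tnn a (k+1) % M := by
    intro k
    induction k with
    | zero => exact ⟨h0, h1⟩
    | succ n ih =>
      refine ⟨ih.2, ?_⟩
      have e : n + 1 + 1 + P = (n + P) + 2 := by omega
      have e2 : n + 1 + P = (n + P) + 1 := by omega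
      rw [e, tnn_step, tnn_step]
      have h2 : tnn a (n + P + 1) % M = tnn a (n+1) % M := by rw [← e2]; exact ih.2
      exact Nat.ModEq.add (Nat.ModEq.mul_left a h2) ih.1
  exact fun k => (key k).1

lemma tnn_mod (a P M : ℕ) (hP : 0 < P) (h : ∀ k, tnn a (k + P) % M = tnn a k % M) :
    ∀ k, tnn a k % M = tnn a (k % P) % M := by
  intro k
  induction k using Nat.strong_induction_on with
  | _ k ih =>
    rcases lt_or_ge k P with hk | hk
    · rw [Nat.mod_eq_of_lt hk]
    · have e : tnn a (k - P + P) % M = tnn a (k - P) % M := h _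
      have e2 : k - P + P = k := by omega
      rw [e2] at e
      rw [e, ih _ (by omega)]
      have e3 : k % P = (k - P) % P := by
        conv_lhs => rw [← e2]
        rw [Nat.add_mod_right]
      rw [e3]

section Toolkit

lemma pow_sign_right1 (p q : ℕ) (hq : q % 4 = 1) : ((-1:ℤ))^(p/2*(q/2)) = 1 := by
  have h : Even (q/2) := Nat.even_iff.2 (by omega)
  exact Even.neg_one_pow (Even.mul_left h (p/2))

lemma pow_sign_left1 (p q : ℕ) (hp : p % 4 = 1) : ((-1:ℤ))^(p/2*(q/2)) = 1 := by
  have h : Even (p/2) := Nat.even_iff.2 (by omega)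
  exact Even.neg_one_pow (Even.mul_right h (q/2))

lemma pow_sign_33 (p q : ℕ) (hp : p % 4 = 3) (hq : q % 4 = 3) : ((-1:ℤ))^(p/2*(q/2)) = -1 := by
  have h : Odd (p/2 * (q/2)) := (Nat.odd_iff.2 (by omega)).mul (Nat.odd_iff.2 (by omega))
  exact h.neg_one_pow

lemma jac_two_pos {q : ℕ} (h : q % 8 = 1 ∨ q % 8 = 7) : jacobiSym 2 q = 1 := by
  have h2 : q % 2 = 1 := by rcases h with h | h <;> omega
  rw [jacobiSym.at_two (Nat.odd_iff.2 h2), ZMod.χ₈_nat_eq_if_mod_eight]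
  rcases h with h | h <;> simp [h, h2]

lemma jac_two_neg {q : ℕ} (h : q % 8 = 3 ∨ q % 8 = 5) : jacobiSym 2 q = -1 := by
  have h2 : q % 2 = 1 := by rcases h with h | h <;> omega
  rw [jacobiSym.at_two (Nat.odd_iff.2 h2), ZMod.χ₈_nat_eq_if_mod_eight]
  rcases h with h | h <;> rw [h] <;> simp [h2]

lemma jac_neg_one_pos {q : ℕ} (h : q % 4 = 1) : jacobiSym (-1) q = 1 := by
  have h2 : q % 2 = 1 := by omega
  rw [jacobiSym.at_neg_one (Nat.odd_iff.2 h2), ZMod.χ₄_nat_eq_if_mod_four]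
  simp [h, h2]

lemma jac_neg_one_neg {q : ℕ} (h : q % 4 = 3) : jacobiSym (-1) q = -1 := by
  have h2 : q % 2 = 1 := by omega
  rw [jacobiSym.at_neg_one (Nat.odd_iff.2 h2), ZMod.χ₄_nat_eq_if_mod_four, h]
  simp [h2]

lemma jac_three {q : ℕ} (h : q % 12 = 1) : jacobiSym (3:ℕ) q = 1 := by
  have hq : Odd q := Nat.odd_iff.2 (by omega)
  rw [jacobiSym.quadratic_reciprocity (by decide) hq]
  have h1 : ((-1:ℤ))^(3/2*(q/2)) = 1 := by
    have : (3:ℕ)/2 = 1 := by norm_num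
    rw [this, one_mul]
    exact Even.neg_one_pow (Nat.even_iff.2 (by omega))
  rw [h1, one_mul, jacobiSym.mod_left]
  have h3 : ((q:ℤ)) % ((3:ℕ):ℤ) = 1 := by
    have : q % 3 = 1 := by omega
    push_cast
    omega
  rw [show ((3:ℕ):ℤ) = ((3:ℕ):ℤ) from rfl] at h3
  rw [h3, jacobiSym.one_left]

lemma jac_four {q : ℕ} (hq : q % 2 = 1) : jacobiSym (4:ℕ) q = 1 := by
  have h : ((2:ℤ)).gcd q = 1 := by
    show (2:ℕ).gcd q = 1
    rw [Nat.gcd_rec, hq]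
    rfl
  have h4 : ((4:ℕ):ℤ) = (2:ℤ)^2 := by norm_num
  rw [h4, jacobiSym.sq_one' h]

end Toolkit

section Core

lemma jac_mod_reduce {x y c : ℕ} {q : ℕ} (h : x = c * q + y) :
    jacobiSym (x:ℤ) q = jacobiSym (y:ℤ) q := by
  apply jacobiSym.mod_left'
  rw [h]
  push_cast
  rw [show ((c:ℤ) * q + y) = (y:ℤ) + (q:ℤ) * c by ring, Int.add_mul_emod_self_left]

lemma step_main {a p q r : ℕ} (hp : p % 2 = 1) (hq : q % 2 = 1) (hr : r = a * q + p)
    (s : ℤ) (hs : ((-1:ℤ))^(p/2*(q/2)) = s) :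
    jacobiSym (r:ℤ) q = s * jacobiSym (q:ℤ) p := by
  rw [jac_mod_reduce hr, jacobiSym.quadratic_reciprocity (Nat.odd_iff.2 hp) (Nat.odd_iff.2 hq), hs]

lemma gap_main {a p u q r : ℕ} (hp : p % 2 = 1) (hq : q % 2 = 1)
    (hQ : q = a * u + p) (hR : r = a * q + u)
    (sa sq se spa : ℤ) (hsa : jacobiSym (a:ℤ) q = sa) (hsa2 : sa * sa = 1)
    (hsq : jacobiSym (-1:ℤ) q = sq) (hse : ((-1:ℤ))^(p/2*(q/2)) = se)
    (hspa : jacobiSym (a:ℤ) p = spa) :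
    jacobiSym (r:ℤ) q = sa * sq * se * spa * jacobiSym (u:ℤ) p := by
  have h1 : jacobiSym (r:ℤ) q = jacobiSym (u:ℤ) q := by
    apply jacobiSym.mod_left'
    rw [hR]; push_cast
    rw [show ((a:ℤ) * q + u) = (u:ℤ) + (q:ℤ) * a by ring, Int.add_mul_emod_self_left]
  have h2 : jacobiSym ((a:ℤ) * u) q = jacobiSym (-(p:ℤ)) q := by
    apply jacobiSym.mod_left'
    have e : ((a:ℤ) * u) = (-(p:ℤ)) + (q:ℤ) * 1 := by push_cast [hQ]; ring
    rw [e, Int.add_mul_emod_self_left]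
  have h2' : sa * jacobiSym (u:ℤ) q = sq * jacobiSym (p:ℤ) q := by
    rw [← hsa, ← hsq, ← jacobiSym.mul_left, h2,
      show (-(p:ℤ)) = -1 * (p:ℤ) by ring, jacobiSym.mul_left]
  have h3 : jacobiSym (p:ℤ) q = se * jacobiSym (q:ℤ) p := by
    rw [jacobiSym.quadratic_reciprocity (Nat.odd_iff.2 hp) (Nat.odd_iff.2 hq), hse]
  have h4 : jacobiSym (q:ℤ) p = spa * jacobiSym (u:ℤ) p := by
    have : jacobiSym (q:ℤ) p = jacobiSym ((a*u : ℕ):ℤ) p := by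
      apply jacobiSym.mod_left'
      have e : ((q:ℤ)) = ((a*u : ℕ):ℤ) + (p:ℤ) * 1 := by push_cast [hQ]; ring
      rw [e, Int.add_mul_emod_self_left]
    rw [this]
    push_cast
    rw [jacobiSym.mul_left, hspa]
  calc jacobiSym (r:ℤ) q = (sa * sa) * jacobiSym (u:ℤ) q := by rw [hsa2, one_mul, h1]
    _ = sa * (sa * jacobiSym (u:ℤ) q) := by ring
    _ = sa * (sq * (se * (spa * jacobiSym (u:ℤ) p))) := by rw [h2', h3, h4]
    _ = sa * sq * se * spa * jacobiSym (u:ℤ) p := by ring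

lemma gap2_main {a p h u q r : ℕ} (hp : p % 2 = 1) (hq : q % 2 = 1) (hh : h % 2 = 1)
    (hu : u = 2 * h) (hQ : q = a * u + p) (hR : r = a * q + u)
    (s2q s1 s2 s2p : ℤ) (h2q : jacobiSym 2 q = s2q)
    (hs1 : ((-1:ℤ))^(h/2*(q/2)) = s1) (hs2 : ((-1:ℤ))^(p/2*(h/2)) = s2)
    (h2p : jacobiSym 2 p = s2p) (h2p2 : s2p * s2p = 1) :
    jacobiSym (r:ℤ) q = s2q * s1 * s2 * s2p * jacobiSym (u:ℤ) p := by
  have h1 : jacobiSym (r:ℤ) q = jacobiSym (u:ℤ) q := by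
    apply jacobiSym.mod_left'
    rw [hR]; push_cast
    rw [show ((a:ℤ) * q + u) = (u:ℤ) + (q:ℤ) * a by ring, Int.add_mul_emod_self_left]
  have h2 : jacobiSym (u:ℤ) q = s2q * jacobiSym (h:ℤ) q := by
    rw [hu]; push_cast; rw [jacobiSym.mul_left, h2q]
  have h3 : jacobiSym (h:ℤ) q = s1 * jacobiSym (q:ℤ) h := by
    rw [jacobiSym.quadratic_reciprocity (Nat.odd_iff.2 hh) (Nat.odd_iff.2 hq), hs1]
  have h4 : jacobiSym (q:ℤ) h = jacobiSym (p:ℤ) h := by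
    apply jacobiSym.mod_left'
    have e : ((q:ℤ)) = (p:ℤ) + (h:ℤ) * (2*a) := by push_cast [hQ, hu]; ring
    rw [e, Int.add_mul_emod_self_left]
  have h5 : jacobiSym (p:ℤ) h = s2 * jacobiSym (h:ℤ) p := by
    rw [jacobiSym.quadratic_reciprocity (Nat.odd_iff.2 hp) (Nat.odd_iff.2 hh), hs2]
  have h6 : jacobiSym (h:ℤ) p = s2p * jacobiSym (u:ℤ) p := by
    have e : jacobiSym (u:ℤ) p = s2p * jacobiSym (h:ℤ) p := by
      rw [hu]; push_cast; rw [jacobiSym.mul_left, h2p]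
    calc jacobiSym (h:ℤ) p = (s2p * s2p) * jacobiSym (h:ℤ) p := by rw [h2p2, one_mul]
      _ = s2p * (s2p * jacobiSym (h:ℤ) p) := by ring
      _ = s2p * jacobiSym (u:ℤ) p := by rw [← e]
  rw [h1, h2, h3, h4, h5, h6]
  ring

end Core

section Tables

lemma m2_1 : ∀ k, tnn 1 k % 2 = tnn 1 (k % 3) % 2 :=
  tnn_mod 1 3 2 (by norm_num) (tnn_shift 1 3 2 (by decide) (by decide))
lemma m4_1 : ∀ k, tnn 1 k % 4 = tnn 1 (k % 6) % 4 :=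
  tnn_mod 1 6 4 (by norm_num) (tnn_shift 1 6 4 (by decide) (by decide))
lemma m2_3 : ∀ k, tnn 3 k % 2 = tnn 3 (k % 3) % 2 :=
  tnn_mod 3 3 2 (by norm_num) (tnn_shift 3 3 2 (by decide) (by decide))
lemma m4_3 : ∀ k, tnn 3 k % 4 = tnn 3 (k % 6) % 4 :=
  tnn_mod 3 6 4 (by norm_num) (tnn_shift 3 6 4 (by decide) (by decide))
lemma m12_3 : ∀ k, tnn 3 k % 12 = tnn 3 (k % 6) % 12 :=
  tnn_mod 3 6 12 (by norm_num) (tnn_shift 3 6 12 (by decide) (by decide))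
lemma m8_3 : ∀ k, tnn 3 k % 8 = tnn 3 (k % 12) % 8 :=
  tnn_mod 3 12 8 (by norm_num) (tnn_shift 3 12 8 (by decide) (by decide))
lemma m2_2 : ∀ k, tnn 2 k % 2 = tnn 2 (k % 2) % 2 :=
  tnn_mod 2 2 2 (by norm_num) (tnn_shift 2 2 2 (by decide) (by decide))
lemma m8_2 : ∀ k, tnn 2 k % 8 = tnn 2 (k % 8) % 8 :=
  tnn_mod 2 8 8 (by norm_num) (tnn_shift 2 8 8 (by decide) (by decide))
lemma m2_4 : ∀ k, tnn 4 k % 2 = tnn 4 (k % 2) % 2 :=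
  tnn_mod 4 2 2 (by norm_num) (tnn_shift 4 2 2 (by decide) (by decide))
lemma m4_4 : ∀ k, tnn 4 k % 4 = tnn 4 (k % 2) % 4 :=
  tnn_mod 4 2 4 (by norm_num) (tnn_shift 4 2 4 (by decide) (by decide))

end Tables

def gfun (r : ℕ) : ℤ := if r = 0 ∨ r = 1 ∨ r = 9 ∨ r = 10 then 1 else -1
def g2fun (r : ℕ) : ℤ := if r = 0 ∨ r = 6 then 1 else -1

lemma jac_one_left' (b : ℕ) : jacobiSym (((1:ℕ)):ℤ) b = 1 := by
  rw [Nat.cast_one]; exact jacobiSym.one_left b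

lemma mainF1 : ∀ k, k % 3 ≠ 2 → jacobiSym ((tnn 1 (k+1)) : ℤ) (tnn 1 k) = gfun (k % 12) := by
  intro k
  induction k using Nat.strong_induction_on with
  | _ k ih =>
  intro hk
  rcases Nat.eq_zero_or_pos k with h0 | hpos
  · subst h0
    rw [show tnn 1 0 = 1 from rfl, jacobiSym.one_right]
    decide
  have hk3 : k % 3 = 0 ∨ k % 3 = 1 := by omega
  rcases hk3 with hk0 | hk1
  · -- gap case, k = j + 2, j % 3 = 1
    obtain ⟨j, rfl⟩ : ∃ j, k = j + 2 := ⟨k - 2, by omega⟩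
    have hj3 : j % 3 = 1 := by omega
    have hp : tnn 1 j % 2 = 1 := by rw [m2_1, show j % 3 = 1 from hj3]; rfl
    have hq : tnn 1 (j+2) % 2 = 1 := by rw [m2_1, show (j+2) % 3 = 0 by omega]; rfl
    have hQ : tnn 1 (j+2) = 1 * tnn 1 (j+1) + tnn 1 j := by rw [tnn_step]
    have hR : tnn 1 (j+3) = 1 * tnn 1 (j+2) + tnn 1 (j+1) := by
      rw [show j+3 = (j+1)+2 from rfl, tnn_step]
    have hIH := ih j (by omega) (by omega)
    show jacobiSym ((tnn 1 (j+3)) : ℤ) (tnn 1 (j+2)) = gfun ((j+2) % 12)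
    have h6 : (j+2) % 6 = 0 ∨ (j+2) % 6 = 3 := by omega
    rcases h6 with h6 | h6
    · have hq4 : tnn 1 (j+2) % 4 = 1 := by rw [m4_1, h6]; rfl
      have := gap_main hp hq hQ hR 1 1 1 1 (jac_one_left' _) (by norm_num)
        (jac_neg_one_pos hq4) (pow_sign_right1 _ _ hq4) (jac_one_left' _)
      rw [this, hIH]
      have hc : j % 12 = 10 ∧ (j+2) % 12 = 0 ∨ j % 12 = 4 ∧ (j+2) % 12 = 6 := by omega
      rcases hc with ⟨h1, h2⟩ | ⟨h1, h2⟩ <;> rw [h1, h2] <;> decide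
    · have hq4 : tnn 1 (j+2) % 4 = 3 := by rw [m4_1, h6]; rfl
      have hp4 : tnn 1 j % 4 = 1 := by rw [m4_1, show j % 6 = 1 by omega]; rfl
      have := gap_main hp hq hQ hR 1 (-1) 1 1 (jac_one_left' _) (by norm_num)
        (jac_neg_one_neg hq4) (pow_sign_left1 _ _ hp4) (jac_one_left' _)
      rw [this, hIH]
      have hc : j % 12 = 1 ∧ (j+2) % 12 = 3 ∨ j % 12 = 7 ∧ (j+2) % 12 = 9 := by omega
      rcases hc with ⟨h1, h2⟩ | ⟨h1, h2⟩ <;> rw [h1, h2] <;> decide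
  · -- step case, k = j + 1, j % 3 = 0
    obtain ⟨j, rfl⟩ : ∃ j, k = j + 1 := ⟨k - 1, by omega⟩
    have hj3 : j % 3 = 0 := by omega
    have hp : tnn 1 j % 2 = 1 := by rw [m2_1, hj3]; rfl
    have hq : tnn 1 (j+1) % 2 = 1 := by rw [m2_1, show (j+1) % 3 = 1 by omega]; rfl
    have hq4 : tnn 1 (j+1) % 4 = 1 := by
      have : (j+1) % 6 = 1 ∨ (j+1) % 6 = 4 := by omega
      rcases this with h | h <;> rw [m4_1, h] <;> rfl
    have hr : tnn 1 (j+2) = 1 * tnn 1 (j+1) + tnn 1 j := by rw [tnn_step]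
    have := step_main hp hq hr 1 (pow_sign_right1 _ _ hq4)
    show jacobiSym ((tnn 1 (j+2)) : ℤ) (tnn 1 (j+1)) = gfun ((j+1) % 12)
    rw [this, one_mul, ih j (by omega) (by omega)]
    have hc : j % 12 = 0 ∧ (j+1) % 12 = 1 ∨ j % 12 = 3 ∧ (j+1) % 12 = 4 ∨
        j % 12 = 6 ∧ (j+1) % 12 = 7 ∨ j % 12 = 9 ∧ (j+1) % 12 = 10 := by omega
    rcases hc with ⟨h1, h2⟩ | ⟨h1, h2⟩ | ⟨h1, h2⟩ | ⟨h1, h2⟩ <;> rw [h1, h2] <;> decide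

lemma jac_two_pos' {q : ℕ} (h : q % 8 = 1 ∨ q % 8 = 7) : jacobiSym (((2:ℕ)):ℤ) q = 1 := by
  rw [Nat.cast_ofNat]; exact jac_two_pos h
lemma jac_two_neg' {q : ℕ} (h : q % 8 = 3 ∨ q % 8 = 5) : jacobiSym (((2:ℕ)):ℤ) q = -1 := by
  rw [Nat.cast_ofNat]; exact jac_two_neg h

lemma mainF3 : ∀ k, k % 3 ≠ 2 → jacobiSym ((tnn 3 (k+1)) : ℤ) (tnn 3 k) = gfun (k % 12) := by
  intro k
  induction k using Nat.strong_induction_on with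
  | _ k ih =>
  intro hk
  rcases Nat.eq_zero_or_pos k with h0 | hpos
  · subst h0
    rw [show tnn 3 0 = 1 from rfl, jacobiSym.one_right]
    decide
  have hk3 : k % 3 = 0 ∨ k % 3 = 1 := by omega
  rcases hk3 with hk0 | hk1
  · -- gap case, k = j + 2, j % 3 = 1
    obtain ⟨j, rfl⟩ : ∃ j, k = j + 2 := ⟨k - 2, by omega⟩
    have hj3 : j % 3 = 1 := by omega
    have hp : tnn 3 j % 2 = 1 := by rw [m2_3, hj3]; rfl
    have hq : tnn 3 (j+2) % 2 = 1 := by rw [m2_3, show (j+2) % 3 = 0 by omega]; rfl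
    have hQ : tnn 3 (j+2) = 3 * tnn 3 (j+1) + tnn 3 j := by rw [tnn_step]
    have hR : tnn 3 (j+3) = 3 * tnn 3 (j+2) + tnn 3 (j+1) := by
      rw [show j+3 = (j+1)+2 from rfl, tnn_step]
    have hIH := ih j (by omega) (by omega)
    show jacobiSym ((tnn 3 (j+3)) : ℤ) (tnn 3 (j+2)) = gfun ((j+2) % 12)
    have h6 : (j+2) % 6 = 0 ∨ (j+2) % 6 = 3 := by omega
    rcases h6 with h6 | h6
    · -- coprime gap
      have hq12 : tnn 3 (j+2) % 12 = 1 := by rw [m12_3, h6]; rfl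
      have hp12 : tnn 3 j % 12 = 1 := by rw [m12_3, show j % 6 = 4 by omega]; rfl
      have hq4 : tnn 3 (j+2) % 4 = 1 := by omega
      have := gap_main hp hq hQ hR 1 1 1 1 (jac_three hq12) (by norm_num)
        (jac_neg_one_pos hq4) (pow_sign_right1 _ _ hq4) (jac_three hp12)
      rw [this, hIH]
      have hc : j % 12 = 10 ∧ (j+2) % 12 = 0 ∨ j % 12 = 4 ∧ (j+2) % 12 = 6 := by omega
      rcases hc with ⟨h1, h2⟩ | ⟨h1, h2⟩ <;> rw [h1, h2] <;> decide
    · -- factor-2 gap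
      have hu8 : tnn 3 (j+1) % 8 = 2 := by
        have : (j+1) % 12 = 2 ∨ (j+1) % 12 = 8 := by omega
        rcases this with h | h <;> rw [m8_3, h] <;> rfl
      have hu : tnn 3 (j+1) = 2 * (tnn 3 (j+1) / 2) := by omega
      have hh : (tnn 3 (j+1) / 2) % 2 = 1 := by omega
      have hh4 : (tnn 3 (j+1) / 2) % 4 = 1 := by omega
      have hs1 := pow_sign_left1 (tnn 3 (j+1) / 2) (tnn 3 (j+2)) hh4
      have hs2 := pow_sign_right1 (tnn 3 j) (tnn 3 (j+1) / 2) hh4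
      have h12 : (j+2) % 12 = 3 ∨ (j+2) % 12 = 9 := by omega
      rcases h12 with h12 | h12
      · have hq8 : tnn 3 (j+2) % 8 = 1 := by rw [m8_3, h12]; rfl
        have hp8 : tnn 3 j % 8 = 3 := by rw [m8_3, show j % 12 = 1 by omega]; rfl
        have := gap2_main hp hq hh hu hQ hR 1 1 1 (-1) (jac_two_pos (Or.inl hq8))
          hs1 hs2 (jac_two_neg (Or.inl hp8)) (by norm_num)
        rw [this, hIH, show j % 12 = 1 by omega, show (j+2) % 12 = 3 from h12]
        decide
      · have hq8 : tnn 3 (j+2) % 8 = 5 := by rw [m8_3, h12]; rfl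
        have hp8 : tnn 3 j % 8 = 7 := by rw [m8_3, show j % 12 = 7 by omega]; rfl
        have := gap2_main hp hq hh hu hQ hR (-1) 1 1 1 (jac_two_neg (Or.inr hq8))
          hs1 hs2 (jac_two_pos (Or.inr hp8)) (by norm_num)
        rw [this, hIH, show j % 12 = 7 by omega, show (j+2) % 12 = 9 from h12]
        decide
  · -- step case, k = j + 1, j % 3 = 0
    obtain ⟨j, rfl⟩ : ∃ j, k = j + 1 := ⟨k - 1, by omega⟩
    have hj3 : j % 3 = 0 := by omega
    have hp : tnn 3 j % 2 = 1 := by rw [m2_3, hj3]; rfl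
    have hq : tnn 3 (j+1) % 2 = 1 := by rw [m2_3, show (j+1) % 3 = 1 by omega]; rfl
    have hp4 : tnn 3 j % 4 = 1 := by
      have : j % 6 = 0 ∨ j % 6 = 3 := by omega
      rcases this with h | h <;> rw [m4_3, h] <;> rfl
    have hr : tnn 3 (j+2) = 3 * tnn 3 (j+1) + tnn 3 j := by rw [tnn_step]
    have := step_main hp hq hr 1 (pow_sign_left1 _ _ hp4)
    show jacobiSym ((tnn 3 (j+2)) : ℤ) (tnn 3 (j+1)) = gfun ((j+1) % 12)
    rw [this, one_mul, ih j (by omega) (by omega)]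
    have hc : j % 12 = 0 ∧ (j+1) % 12 = 1 ∨ j % 12 = 3 ∧ (j+1) % 12 = 4 ∨
        j % 12 = 6 ∧ (j+1) % 12 = 7 ∨ j % 12 = 9 ∧ (j+1) % 12 = 10 := by omega
    rcases hc with ⟨h1, h2⟩ | ⟨h1, h2⟩ | ⟨h1, h2⟩ | ⟨h1, h2⟩ <;> rw [h1, h2] <;> decide

lemma mainF2 : ∀ k, k % 2 = 0 → jacobiSym ((tnn 2 (k+1)) : ℤ) (tnn 2 k) = g2fun (k % 8) := by
  intro k
  induction k using Nat.strong_induction_on with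
  | _ k ih =>
  intro hk
  rcases Nat.eq_zero_or_pos k with h0 | hpos
  · subst h0
    rw [show tnn 2 0 = 1 from rfl, jacobiSym.one_right]
    decide
  obtain ⟨j, rfl⟩ : ∃ j, k = j + 2 := ⟨k - 2, by omega⟩
  have hj2 : j % 2 = 0 := by omega
  have hp : tnn 2 j % 2 = 1 := by rw [m2_2, hj2]; rfl
  have hq : tnn 2 (j+2) % 2 = 1 := by rw [m2_2, show (j+2) % 2 = 0 by omega]; rfl
  have hQ : tnn 2 (j+2) = 2 * tnn 2 (j+1) + tnn 2 j := by rw [tnn_step]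
  have hR : tnn 2 (j+3) = 2 * tnn 2 (j+2) + tnn 2 (j+1) := by
    rw [show j+3 = (j+1)+2 from rfl, tnn_step]
  have hIH := ih j (by omega) hj2
  show jacobiSym ((tnn 2 (j+3)) : ℤ) (tnn 2 (j+2)) = g2fun ((j+2) % 8)
  have h8 : (j+2) % 8 = 0 ∨ (j+2) % 8 = 2 ∨ (j+2) % 8 = 4 ∨ (j+2) % 8 = 6 := by omega
  rcases h8 with h8 | h8 | h8 | h8
  · have hq8 : tnn 2 (j+2) % 8 = 1 := by rw [m8_2, h8]; rfl
    have hp8 : tnn 2 j % 8 = 1 := by rw [m8_2, show j % 8 = 6 by omega]; rfl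
    have hq4 : tnn 2 (j+2) % 4 = 1 := by omega
    have := gap_main hp hq hQ hR 1 1 1 1 (jac_two_pos' (Or.inl hq8)) (by norm_num)
      (jac_neg_one_pos hq4) (pow_sign_right1 _ _ hq4) (jac_two_pos' (Or.inl hp8))
    rw [this, hIH, show j % 8 = 6 by omega, h8]; decide
  · have hq8 : tnn 2 (j+2) % 8 = 5 := by rw [m8_2, h8]; rfl
    have hp8 : tnn 2 j % 8 = 1 := by rw [m8_2, show j % 8 = 0 by omega]; rfl
    have hq4 : tnn 2 (j+2) % 4 = 1 := by omega
    have := gap_main hp hq hQ hR (-1) 1 1 1 (jac_two_neg' (Or.inr hq8)) (by norm_num)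
      (jac_neg_one_pos hq4) (pow_sign_right1 _ _ hq4) (jac_two_pos' (Or.inl hp8))
    rw [this, hIH, show j % 8 = 0 by omega, h8]; decide
  · have hq8 : tnn 2 (j+2) % 8 = 5 := by rw [m8_2, h8]; rfl
    have hp8 : tnn 2 j % 8 = 5 := by rw [m8_2, show j % 8 = 2 by omega]; rfl
    have hq4 : tnn 2 (j+2) % 4 = 1 := by omega
    have := gap_main hp hq hQ hR (-1) 1 1 (-1) (jac_two_neg' (Or.inr hq8)) (by norm_num)
      (jac_neg_one_pos hq4) (pow_sign_right1 _ _ hq4) (jac_two_neg' (Or.inr hp8))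
    rw [this, hIH, show j % 8 = 2 by omega, h8]; decide
  · have hq8 : tnn 2 (j+2) % 8 = 1 := by rw [m8_2, h8]; rfl
    have hp8 : tnn 2 j % 8 = 5 := by rw [m8_2, show j % 8 = 4 by omega]; rfl
    have hq4 : tnn 2 (j+2) % 4 = 1 := by omega
    have := gap_main hp hq hQ hR 1 1 1 (-1) (jac_two_pos' (Or.inl hq8)) (by norm_num)
      (jac_neg_one_pos hq4) (pow_sign_right1 _ _ hq4) (jac_two_neg' (Or.inr hp8))
    rw [this, hIH, show j % 8 = 4 by omega, h8]; decide

lemma mainF4 : ∀ k, k % 2 = 0 → jacobiSym ((tnn 4 (k+1)) : ℤ) (tnn 4 k) = 1 := by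
  intro k
  induction k using Nat.strong_induction_on with
  | _ k ih =>
  intro hk
  rcases Nat.eq_zero_or_pos k with h0 | hpos
  · subst h0
    rw [show tnn 4 0 = 1 from rfl, jacobiSym.one_right]
  obtain ⟨j, rfl⟩ : ∃ j, k = j + 2 := ⟨k - 2, by omega⟩
  have hj2 : j % 2 = 0 := by omega
  have hp : tnn 4 j % 2 = 1 := by rw [m2_4, hj2]; rfl
  have hq : tnn 4 (j+2) % 2 = 1 := by rw [m2_4, show (j+2) % 2 = 0 by omega]; rfl
  have hQ : tnn 4 (j+2) = 4 * tnn 4 (j+1) + tnn 4 j := by rw [tnn_step]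
  have hR : tnn 4 (j+3) = 4 * tnn 4 (j+2) + tnn 4 (j+1) := by
    rw [show j+3 = (j+1)+2 from rfl, tnn_step]
  have hq4 : tnn 4 (j+2) % 4 = 1 := by rw [m4_4, show (j+2) % 2 = 0 by omega]; rfl
  have := gap_main hp hq hQ hR 1 1 1 1 (jac_four hq) (by norm_num)
    (jac_neg_one_pos hq4) (pow_sign_right1 _ _ hq4) (jac_four hp)
  show jacobiSym ((tnn 4 (j+3)) : ℤ) (tnn 4 (j+2)) = 1
  rw [this, ih j (by omega) hj2]
  norm_num

section Assembly

variable {a : ℕ} {f : ℕ → ℤ}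

lemma cfT_tnn (hf : ∀ i, f i = (a:ℤ)) : ∀ k, cfT f k = (tnn a k : ℤ) := by
  have key : ∀ k, cfT f k = (tnn a k : ℤ) ∧ cfT f (k+1) = (tnn a (k+1) : ℤ) := by
    intro k
    induction k with
    | zero =>
      constructor
      · show (1:ℤ) = ((1:ℕ):ℤ); norm_num
      · show f 1 = ((a:ℕ):ℤ); exact hf 1
    | succ n ih =>
      refine ⟨ih.2, ?_⟩
      show f (n+2) * cfT f (n+1) + cfT f n = ((a * tnn a (n+1) + tnn a n : ℕ) : ℤ)
      rw [hf, ih.1, ih.2]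
      push_cast
      ring
  exact fun k => (key k).1

lemma cfS_tnn (hf : ∀ i, f i = (a:ℤ)) : ∀ k, cfS f k = (tnn a (k+1) : ℤ) := by
  have key : ∀ k, cfS f k = (tnn a (k+1) : ℤ) ∧ cfS f (k+1) = (tnn a (k+2) : ℤ) := by
    intro k
    induction k with
    | zero =>
      constructor
      · show f 0 = ((a:ℕ):ℤ); exact hf 0
      · show f 1 * f 0 + 1 = ((a * a + 1 : ℕ) : ℤ)
        rw [hf, hf]; push_cast; ring
    | succ n ih =>
      refine ⟨ih.2, ?_⟩
      show f (n+2) * cfS f (n+1) + cfS f n = ((a * tnn a (n+2) + tnn a (n+1) : ℕ) : ℤ)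
      rw [hf, ih.1, ih.2]
      push_cast
      ring
  exact fun k => (key k).1

lemma jacobiSeq_eq (hf : ∀ i, f i = (a:ℤ)) (k : ℕ) :
    jacobiSeq f k = if tnn a k % 2 = 1 then
      some (jacobiSym ((tnn a (k+1)):ℤ) (tnn a k)) else none := by
  unfold jacobiSeq
  rw [cfT_tnn hf k, cfS_tnn hf k]
  simp [Int.odd_coe_nat, Nat.odd_iff]

end Assembly

section Final

lemma hf1 : ∀ i : ℕ, (fun _ : ℕ => (1:ℤ)) i = ((1:ℕ):ℤ) := fun _ => by norm_num
lemma hf2 : ∀ i : ℕ, (fun _ : ℕ => (2:ℤ)) i = ((2:ℕ):ℤ) := fun _ => by norm_num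
lemma hf3 : ∀ i : ℕ, (fun _ : ℕ => (3:ℤ)) i = ((3:ℕ):ℤ) := fun _ => by norm_num
lemma hf4 : ∀ i : ℕ, (fun _ : ℕ => (4:ℤ)) i = ((4:ℕ):ℤ) := fun _ => by norm_num

lemma not2_of_odd1 {k : ℕ} (h : tnn 1 k % 2 = 1) : k % 3 ≠ 2 := by
  intro h2
  rw [m2_1, h2] at h
  exact absurd h (by decide)

lemma not2_of_odd3 {k : ℕ} (h : tnn 3 k % 2 = 1) : k % 3 ≠ 2 := by
  intro h2
  rw [m2_3, h2] at h
  exact absurd h (by decide)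

lemma even_of_odd2 {k : ℕ} (h : tnn 2 k % 2 = 1) : k % 2 = 0 := by
  by_contra h2
  rw [m2_2, show k % 2 = 1 by omega] at h
  exact absurd h (by decide)

lemma even_of_odd4 {k : ℕ} (h : tnn 4 k % 2 = 1) : k % 2 = 0 := by
  by_contra h2
  rw [m2_4, show k % 2 = 1 by omega] at h
  exact absurd h (by decide)

lemma upper1 : ∀ k, jacobiSeq (fun _ => 1) (k + 12) = jacobiSeq (fun _ => 1) k := by
  intro k
  rw [jacobiSeq_eq hf1 (k+12), jacobiSeq_eq hf1 k]
  have hpar : tnn 1 (k+12) % 2 = tnn 1 k % 2 := by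
    rw [m2_1 (k+12), m2_1 k, show (k+12) % 3 = k % 3 by omega]
  by_cases hO : tnn 1 k % 2 = 1
  · rw [if_pos hO, if_pos (by omega)]
    rw [mainF1 (k+12) (by have := not2_of_odd1 hO; omega), mainF1 k (not2_of_odd1 hO),
      show (k+12) % 12 = k % 12 by omega]
  · rw [if_neg hO, if_neg (by omega)]

lemma upper3 : ∀ k, jacobiSeq (fun _ => 3) (k + 12) = jacobiSeq (fun _ => 3) k := by
  intro k
  rw [jacobiSeq_eq hf3 (k+12), jacobiSeq_eq hf3 k]
  have hpar : tnn 3 (k+12) % 2 = tnn 3 k % 2 := by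
    rw [m2_3 (k+12), m2_3 k, show (k+12) % 3 = k % 3 by omega]
  by_cases hO : tnn 3 k % 2 = 1
  · rw [if_pos hO, if_pos (by omega)]
    rw [mainF3 (k+12) (by have := not2_of_odd3 hO; omega), mainF3 k (not2_of_odd3 hO),
      show (k+12) % 12 = k % 12 by omega]
  · rw [if_neg hO, if_neg (by omega)]

lemma upper2 : ∀ k, jacobiSeq (fun _ => 2) (k + 8) = jacobiSeq (fun _ => 2) k := by
  intro k
  rw [jacobiSeq_eq hf2 (k+8), jacobiSeq_eq hf2 k]
  have hpar : tnn 2 (k+8) % 2 = tnn 2 k % 2 := by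
    rw [m2_2 (k+8), m2_2 k, show (k+8) % 2 = k % 2 by omega]
  by_cases hO : tnn 2 k % 2 = 1
  · rw [if_pos hO, if_pos (by omega)]
    rw [mainF2 (k+8) (by have := even_of_odd2 hO; omega), mainF2 k (even_of_odd2 hO),
      show (k+8) % 8 = k % 8 by omega]
  · rw [if_neg hO, if_neg (by omega)]

lemma upper4 : ∀ k, jacobiSeq (fun _ => 4) (k + 2) = jacobiSeq (fun _ => 4) k := by
  intro k
  rw [jacobiSeq_eq hf4 (k+2), jacobiSeq_eq hf4 k]
  have hpar : tnn 4 (k+2) % 2 = tnn 4 k % 2 := by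
    rw [m2_4 (k+2), m2_4 k, show (k+2) % 2 = k % 2 by omega]
  by_cases hO : tnn 4 k % 2 = 1
  · rw [if_pos hO, if_pos (by omega)]
    rw [mainF4 (k+2) (by have := even_of_odd4 hO; omega), mainF4 k (even_of_odd4 hO)]
  · rw [if_neg hO, if_neg (by omega)]

end Final

section Lower

lemma lower1 : ∀ L, 0 < L → (∀ k, jacobiSeq (fun _ => 1) (k + L) = jacobiSeq (fun _ => 1) k) →
    12 ≤ L := by
  intro L hL hper
  by_contra hcon
  have hmis : ∀ c : ℕ, jacobiSeq (fun _ => 1) (c + L) = jacobiSeq (fun _ => 1) c := hper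
  interval_cases L
  · have h := hmis 2
    rw [jacobiSeq_eq hf1 (2+1), jacobiSeq_eq hf1 2, if_pos (by decide), if_neg (by decide)] at h
    exact Option.some_ne_none _ h
  · have h := hmis 2
    rw [jacobiSeq_eq hf1 (2+2), jacobiSeq_eq hf1 2, if_pos (by decide), if_neg (by decide)] at h
    exact Option.some_ne_none _ h
  · have h := hmis 0
    rw [jacobiSeq_eq hf1 (0+3), jacobiSeq_eq hf1 0, if_pos (by decide), if_pos (by decide),
      mainF1 (0+3) (by decide), mainF1 0 (by decide)] at h
    exact absurd h (by decide)
  · have h := hmis 2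
    rw [jacobiSeq_eq hf1 (2+4), jacobiSeq_eq hf1 2, if_pos (by decide), if_neg (by decide)] at h
    exact Option.some_ne_none _ h
  · have h := hmis 2
    rw [jacobiSeq_eq hf1 (2+5), jacobiSeq_eq hf1 2, if_pos (by decide), if_neg (by decide)] at h
    exact Option.some_ne_none _ h
  · have h := hmis 0
    rw [jacobiSeq_eq hf1 (0+6), jacobiSeq_eq hf1 0, if_pos (by decide), if_pos (by decide),
      mainF1 (0+6) (by decide), mainF1 0 (by decide)] at h
    exact absurd h (by decide)
  · have h := hmis 2
    rw [jacobiSeq_eq hf1 (2+7), jacobiSeq_eq hf1 2, if_pos (by decide), if_neg (by decide)] at h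
    exact Option.some_ne_none _ h
  · have h := hmis 2
    rw [jacobiSeq_eq hf1 (2+8), jacobiSeq_eq hf1 2, if_pos (by decide), if_neg (by decide)] at h
    exact Option.some_ne_none _ h
  · have h := hmis 3
    rw [jacobiSeq_eq hf1 (3+9), jacobiSeq_eq hf1 3, if_pos (by decide), if_pos (by decide),
      mainF1 (3+9) (by decide), mainF1 3 (by decide)] at h
    exact absurd h (by decide)
  · have h := hmis 2
    rw [jacobiSeq_eq hf1 (2+10), jacobiSeq_eq hf1 2, if_pos (by decide), if_neg (by decide)] at h
    exact Option.some_ne_none _ h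
  · have h := hmis 2
    rw [jacobiSeq_eq hf1 (2+11), jacobiSeq_eq hf1 2, if_pos (by decide), if_neg (by decide)] at h
    exact Option.some_ne_none _ h

lemma lower3 : ∀ L, 0 < L → (∀ k, jacobiSeq (fun _ => 3) (k + L) = jacobiSeq (fun _ => 3) k) →
    12 ≤ L := by
  intro L hL hper
  by_contra hcon
  have hmis : ∀ c : ℕ, jacobiSeq (fun _ => 3) (c + L) = jacobiSeq (fun _ => 3) c := hper
  interval_cases L
  · have h := hmis 2
    rw [jacobiSeq_eq hf3 (2+1), jacobiSeq_eq hf3 2, if_pos (by decide), if_neg (by decide)] at h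
    exact Option.some_ne_none _ h
  · have h := hmis 2
    rw [jacobiSeq_eq hf3 (2+2), jacobiSeq_eq hf3 2, if_pos (by decide), if_neg (by decide)] at h
    exact Option.some_ne_none _ h
  · have h := hmis 0
    rw [jacobiSeq_eq hf3 (0+3), jacobiSeq_eq hf3 0, if_pos (by decide), if_pos (by decide),
      mainF3 (0+3) (by decide), mainF3 0 (by decide)] at h
    exact absurd h (by decide)
  · have h := hmis 2
    rw [jacobiSeq_eq hf3 (2+4), jacobiSeq_eq hf3 2, if_pos (by decide), if_neg (by decide)] at h
    exact Option.some_ne_none _ h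
  · have h := hmis 2
    rw [jacobiSeq_eq hf3 (2+5), jacobiSeq_eq hf3 2, if_pos (by decide), if_neg (by decide)] at h
    exact Option.some_ne_none _ h
  · have h := hmis 0
    rw [jacobiSeq_eq hf3 (0+6), jacobiSeq_eq hf3 0, if_pos (by decide), if_pos (by decide),
      mainF3 (0+6) (by decide), mainF3 0 (by decide)] at h
    exact absurd h (by decide)
  · have h := hmis 2
    rw [jacobiSeq_eq hf3 (2+7), jacobiSeq_eq hf3 2, if_pos (by decide), if_neg (by decide)] at h
    exact Option.some_ne_none _ h
  · have h := hmis 2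
    rw [jacobiSeq_eq hf3 (2+8), jacobiSeq_eq hf3 2, if_pos (by decide), if_neg (by decide)] at h
    exact Option.some_ne_none _ h
  · have h := hmis 3
    rw [jacobiSeq_eq hf3 (3+9), jacobiSeq_eq hf3 3, if_pos (by decide), if_pos (by decide),
      mainF3 (3+9) (by decide), mainF3 3 (by decide)] at h
    exact absurd h (by decide)
  · have h := hmis 2
    rw [jacobiSeq_eq hf3 (2+10), jacobiSeq_eq hf3 2, if_pos (by decide), if_neg (by decide)] at h
    exact Option.some_ne_none _ h
  · have h := hmis 2
    rw [jacobiSeq_eq hf3 (2+11), jacobiSeq_eq hf3 2, if_pos (by decide), if_neg (by decide)] at h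
    exact Option.some_ne_none _ h

lemma lower2 : ∀ L, 0 < L → (∀ k, jacobiSeq (fun _ => 2) (k + L) = jacobiSeq (fun _ => 2) k) →
    8 ≤ L := by
  intro L hL hper
  by_contra hcon
  have hmis : ∀ c : ℕ, jacobiSeq (fun _ => 2) (c + L) = jacobiSeq (fun _ => 2) c := hper
  interval_cases L
  · have h := hmis 1
    rw [jacobiSeq_eq hf2 (1+1), jacobiSeq_eq hf2 1, if_pos (by decide), if_neg (by decide)] at h
    exact Option.some_ne_none _ h
  · have h := hmis 0
    rw [jacobiSeq_eq hf2 (0+2), jacobiSeq_eq hf2 0, if_pos (by decide), if_pos (by decide),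
      mainF2 (0+2) (by decide), mainF2 0 (by decide)] at h
    exact absurd h (by decide)
  · have h := hmis 1
    rw [jacobiSeq_eq hf2 (1+3), jacobiSeq_eq hf2 1, if_pos (by decide), if_neg (by decide)] at h
    exact Option.some_ne_none _ h
  · have h := hmis 0
    rw [jacobiSeq_eq hf2 (0+4), jacobiSeq_eq hf2 0, if_pos (by decide), if_pos (by decide),
      mainF2 (0+4) (by decide), mainF2 0 (by decide)] at h
    exact absurd h (by decide)
  · have h := hmis 1
    rw [jacobiSeq_eq hf2 (1+5), jacobiSeq_eq hf2 1, if_pos (by decide), if_neg (by decide)] at h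
    exact Option.some_ne_none _ h
  · have h := hmis 2
    rw [jacobiSeq_eq hf2 (2+6), jacobiSeq_eq hf2 2, if_pos (by decide), if_pos (by decide),
      mainF2 (2+6) (by decide), mainF2 2 (by decide)] at h
    exact absurd h (by decide)
  · have h := hmis 1
    rw [jacobiSeq_eq hf2 (1+7), jacobiSeq_eq hf2 1, if_pos (by decide), if_neg (by decide)] at h
    exact Option.some_ne_none _ h

lemma lower4 : ∀ L, 0 < L → (∀ k, jacobiSeq (fun _ => 4) (k + L) = jacobiSeq (fun _ => 4) k) →
    2 ≤ L := by
  intro L hL hper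
  by_contra hcon
  have hL1 : L = 1 := by omega
  subst hL1
  have h := hper 0
  rw [jacobiSeq_eq hf4 (0+1), jacobiSeq_eq hf4 0, if_neg (by decide), if_pos (by decide)] at h
  exact Option.some_ne_none _ h.symm

end Lower

theorem jacobi_sequence_periods_of_constant_cfs :
    ((∀ k, jacobiSeq (fun _ => 1) (k + 12) = jacobiSeq (fun _ => 1) k) ∧
      ∀ L, 0 < L → (∀ k, jacobiSeq (fun _ => 1) (k + L) = jacobiSeq (fun _ => 1) k) → 12 ≤ L) ∧
    ((∀ k, jacobiSeq (fun _ => 3) (k + 12) = jacobiSeq (fun _ => 3) k) ∧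
      ∀ L, 0 < L → (∀ k, jacobiSeq (fun _ => 3) (k + L) = jacobiSeq (fun _ => 3) k) → 12 ≤ L) ∧
    ((∀ k, jacobiSeq (fun _ => 2) (k + 8) = jacobiSeq (fun _ => 2) k) ∧
      ∀ L, 0 < L → (∀ k, jacobiSeq (fun _ => 2) (k + L) = jacobiSeq (fun _ => 2) k) → 8 ≤ L) ∧
    ((∀ k, jacobiSeq (fun _ => 4) (k + 2) = jacobiSeq (fun _ => 4) k) ∧
      ∀ L, 0 < L → (∀ k, jacobiSeq (fun _ => 4) (k + L) = jacobiSeq (fun _ => 4) k) → 2 ≤ L) :=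
  ⟨⟨upper1, lower1⟩, ⟨upper3, lower3⟩, ⟨upper2, lower2⟩, ⟨upper4, lower4⟩⟩
end
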